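/- arXiv:math/0307166 — 8 statements merged into one kernel-verified Lean document; each statement's English description precedes it below -/
import Mathlib

section
/- Under the bipartite reflection setup, suppose u : V → ℝ satisfies 2·u(g) = Σ_{h ∈ M_g} u(h) for every vertex g (equivalently σ_g(u) = u for all g), and define the linear form L(x) = Σ_{g ∈ V•} u(g)·x(g) − Σ_{g ∈ V∘} u(g)·x(g) for x : V → ℝ. Then for every x : V → ℝ one has L(c₁(x)) = L(c₋₁(x)) = −L(x). -/
/-- The simultaneous reflection applied at all vertices `g` with `p g = b`
(the product of the commuting reflections `σ_g` over that class of a bipartition). -/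
def creflect {V : Type*} [Fintype V] [DecidableEq V] (G : SimpleGraph V)
    [DecidableRel G.Adj] (p : V → Bool) (b : Bool) (x : V → ℝ) : V → ℝ :=
  fun g => if p g = b then -x g + ∑ h ∈ G.neighborFinset g, x h else x g

/-- The alternating composition of `n` factors, the rightmost factor being the
reflection of class `start`; the leftmost factor alternates. -/
def czNat {V : Type*} [Fintype V] [DecidableEq V] (G : SimpleGraph V)
    [DecidableRel G.Adj] (p : V → Bool) (start : Bool) : ℕ → (V → ℝ) → (V → ℝ)
  | 0 => id
  | n + 1 => creflect G p (if n % 2 = 0 then start else !start) ∘ czNat G p start n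

/-- `cz G p t` is the Coxeter-type transformation `c_t`, `t ∈ ℤ`: `c₀ = id`;
for `t > 0` the alternating composition of `t` factors ending (on the right) with
`c• = creflect G p false`; for `t < 0` ending with `c∘ = creflect G p true`.
(Here `p g = true` means `g` is even, `p g = false` means `g` is odd.) -/
def cz {V : Type*} [Fintype V] [DecidableEq V] (G : SimpleGraph V)
    [DecidableRel G.Adj] (p : V → Bool) (t : ℤ) : (V → ℝ) → (V → ℝ) :=
  if 0 ≤ t then czNat G p false t.toNat else czNat G p true (-t).toNat

lemma key_swap {V : Type*} [Fintype V] [DecidableEq V] (G : SimpleGraph V)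
    [DecidableRel G.Adj] (p : V → Bool)
    (hbip : ∀ a b : V, G.Adj a b → p a ≠ p b)
    (u : V → ℝ) (hharm : ∀ g, 2 * u g = ∑ h ∈ G.neighborFinset g, u h)
    (x : V → ℝ) (b : Bool) :
    (∑ g ∈ Finset.univ.filter (fun g => p g = b), u g * ∑ h ∈ G.neighborFinset g, x h)
      = 2 * ∑ h ∈ Finset.univ.filter (fun h => p h = !b), u h * x h := by
  have step1 :
      (∑ g ∈ Finset.univ.filter (fun g => p g = b), u g * ∑ h ∈ G.neighborFinset g, x h)
        = ∑ g : V, ∑ h : V, if p g = b ∧ G.Adj g h then u g * x h else 0 := by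
    rw [Finset.sum_filter]
    refine Finset.sum_congr rfl fun g _ => ?_
    by_cases hg : p g = b
    · simp only [hg, if_true, true_and, Finset.mul_sum]
      rw [SimpleGraph.neighborFinset_eq_filter, Finset.sum_filter]
    · simp [hg]
  rw [step1, Finset.sum_comm]
  have step2 : ∀ h : V, (∑ g : V, if p g = b ∧ G.Adj g h then u g * x h else 0)
      = (if p h = !b then 2 * (u h * x h) else 0) := by
    intro h
    by_cases hh : p h = !b
    · rw [if_pos hh]
      have e : ∀ g : V, (if p g = b ∧ G.Adj g h then u g * x h else 0)
          = (if g ∈ G.neighborFinset h then u g * x h else 0) := by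
        intro g
        by_cases hadj : G.Adj g h
        · have hpg : p g = b := by
            have hne := hbip g h hadj
            rw [hh] at hne
            cases hb : p g <;> cases b <;> simp_all
          simp [hadj, hpg, SimpleGraph.mem_neighborFinset, hadj.symm]
        · rw [if_neg (by rintro ⟨_, h'⟩; exact hadj h'),
            if_neg (by rw [SimpleGraph.mem_neighborFinset]; exact fun h' => hadj h'.symm)]
      rw [Finset.sum_congr rfl (fun g _ => e g), Finset.sum_ite_mem,
        Finset.univ_inter, ← Finset.sum_mul, ← hharm h]
      ring
    · rw [if_neg hh]
      apply Finset.sum_eq_zero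
      intro g _
      rw [if_neg]
      rintro ⟨hpg, hadj⟩
      have hne := hbip g h hadj
      cases hb : p h <;> cases b <;> simp_all
  rw [Finset.sum_congr rfl (fun h _ => step2 h), Finset.sum_ite,
    Finset.sum_const_zero, add_zero, ← Finset.mul_sum]

lemma L_reflect {V : Type*} [Fintype V] [DecidableEq V] (G : SimpleGraph V)
    [DecidableRel G.Adj] (p : V → Bool)
    (hbip : ∀ a b : V, G.Adj a b → p a ≠ p b)
    (u : V → ℝ) (hharm : ∀ g, 2 * u g = ∑ h ∈ G.neighborFinset g, u h)
    (x : V → ℝ) (b : Bool) :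
    (∑ g ∈ Finset.univ.filter (fun g => p g = false), u g * creflect G p b x g) -
    (∑ g ∈ Finset.univ.filter (fun g => p g = true), u g * creflect G p b x g)
    = -((∑ g ∈ Finset.univ.filter (fun g => p g = false), u g * x g) -
        (∑ g ∈ Finset.univ.filter (fun g => p g = true), u g * x g)) := by
  have key := key_swap G p hbip u hharm x b
  have eb : ∑ g ∈ Finset.univ.filter (fun g => p g = b), u g * creflect G p b x g
      = -(∑ g ∈ Finset.univ.filter (fun g => p g = b), u g * x g)
        + 2 * ∑ h ∈ Finset.univ.filter (fun h => p h = !b), u h * x h := by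
    rw [← key, ← Finset.sum_neg_distrib, ← Finset.sum_add_distrib]
    refine Finset.sum_congr rfl fun g hg => ?_
    rw [Finset.mem_filter] at hg
    simp only [creflect, hg.2, if_true]
    ring
  have enb : ∑ g ∈ Finset.univ.filter (fun g => p g = !b), u g * creflect G p b x g
      = ∑ g ∈ Finset.univ.filter (fun g => p g = !b), u g * x g := by
    refine Finset.sum_congr rfl fun g hg => ?_
    rw [Finset.mem_filter] at hg
    have : p g ≠ b := by cases b <;> simp_all
    simp [creflect, this]
  cases b
  · simp only [Bool.not_false] at eb enb
    rw [eb, enb]; ring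
  · simp only [Bool.not_true] at eb enb
    rw [eb, enb]; ring

/-- If `u` satisfies `2·u(g) = Σ_{h ∈ M_g} u(h)` for every vertex `g`
and `L(x) = Σ_{g odd} u(g)·x(g) − Σ_{g even} u(g)·x(g)`, then
`L(c₁(x)) = L(c₋₁(x)) = −L(x)` for every `x`. -/
theorem linear_form_antiinvariant {V : Type*} [Fintype V] [DecidableEq V]
    (G : SimpleGraph V) [DecidableRel G.Adj] (p : V → Bool)
    (hbip : ∀ a b : V, G.Adj a b → p a ≠ p b)
    (u : V → ℝ) (hharm : ∀ g, 2 * u g = ∑ h ∈ G.neighborFinset g, u h)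
    (L : (V → ℝ) → ℝ)
    (hL : ∀ y : V → ℝ, L y =
      (∑ g ∈ Finset.univ.filter (fun g => p g = false), u g * y g) -
      (∑ g ∈ Finset.univ.filter (fun g => p g = true), u g * y g))
    (x : V → ℝ) :
    L (cz G p 1 x) = -L x ∧ L (cz G p (-1) x) = -L x := by
  have h1 : cz G p 1 x = creflect G p false x := by
    simp [cz, czNat]
  have h2 : cz G p (-1) x = creflect G p true x := by
    norm_num [cz, czNat]
  constructor
  · rw [h1, hL, hL x]; exact L_reflect G p hbip u hharm x false
  · rw [h2, hL, hL x]; exact L_reflect G p hbip u hharm x true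
end

section
/- The set of solutions v ∈ Ṽ of the equation ρ(v) = 4 is exactly K = {(1,1,1,1), (2,2,2), (3,3,1), (5,2,1)}. -/
/-- `ρ(n) = 1 + (n−1)/(n+1)`; note that this gives `ρ(0) = 0`. -/
noncomputable def rho (n : ℕ) : ℝ := 1 + ((n : ℝ) - 1) / ((n : ℝ) + 1)

/-- The element of `Ṽ` whose entries are those of the list `l` (then zeros). -/
def ofList (l : List ℕ) : ℕ → ℕ := fun i => l.getD i 0

/-- Membership in `Ṽ`: a nonincreasing, finitely supported sequence
of nonnegative integers. -/
def IsVt (v : ℕ → ℕ) : Prop :=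
  (∀ i j, i ≤ j → v j ≤ v i) ∧ ∃ s, ∀ i, s ≤ i → v i = 0

/-- `ρ(v) = Σ_i ρ(v_i)`, a finite sum since `ρ(0) = 0` and `v` is finitely
supported. -/
noncomputable def rhoV (v : ℕ → ℕ) : ℝ := ∑ᶠ i, rho (v i)

lemma rho_eq (n : ℕ) : rho n = 2 - 2 / ((n : ℝ) + 1) := by
  have h : ((n : ℝ) + 1) ≠ 0 := by positivity
  unfold rho; field_simp; ring

lemma rho_strictMono : StrictMono rho := by
  intro m n h
  rw [rho_eq, rho_eq]
  have h1 : (0:ℝ) < (m:ℝ) + 1 := by positivity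
  have h2 : (m:ℝ) + 1 < (n:ℝ) + 1 := by exact_mod_cast by omega
  have := div_lt_div_of_pos_left (by norm_num : (0:ℝ) < 2) h1 h2
  linarith

lemma rho_nonneg (n : ℕ) : 0 ≤ rho n := by
  have := rho_strictMono.monotone (Nat.zero_le n)
  simpa [rho] using this

lemma rho_lt_two (n : ℕ) : rho n < 2 := by
  rw [rho_eq]
  have : (0:ℝ) < 2 / ((n:ℝ) + 1) := by positivity
  linarith

lemma one_le_rho {n : ℕ} (h : 1 ≤ n) : 1 ≤ rho n := by
  have := rho_strictMono.monotone h
  simpa [rho] using this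

lemma rhoV_eq_sum (v : ℕ → ℕ) (s : ℕ) (hs : ∀ i, s ≤ i → v i = 0) :
    rhoV v = ∑ i ∈ Finset.range s, rho (v i) := by
  apply finsum_eq_sum_of_support_subset
  intro i hi
  simp only [Function.mem_support] at hi
  simp only [Finset.coe_range, Set.mem_Iio]
  by_contra h
  push_neg at h
  rw [hs i h] at hi
  exact hi (by norm_num [rho])

lemma rho_le_of_le {m n : ℕ} (h : m ≤ n) : rho m ≤ rho n := rho_strictMono.monotone h

lemma rho_inj {m n : ℕ} (h : rho m = rho n) : m = n := rho_strictMono.injective h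

/-- The set of solutions `v ∈ Ṽ` of `ρ(v) = 4` is exactly
`K = {(1,1,1,1), (2,2,2), (3,3,1), (5,2,1)}`. -/
theorem rho_eq_four_solutions (v : ℕ → ℕ) (hv : IsVt v) :
    rhoV v = 4 ↔
      v = ofList [1, 1, 1, 1] ∨ v = ofList [2, 2, 2] ∨
      v = ofList [3, 3, 1] ∨ v = ofList [5, 2, 1] := by
  obtain ⟨hmono, s, hs⟩ := hv
  constructor
  · intro h
    -- first, v i = 0 for i ≥ 4
    have h4 : ∀ i, 4 ≤ i → v i = 0 := by
      intro i hi
      by_contra hne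
      have hv4 : 1 ≤ v i := Nat.one_le_iff_ne_zero.mpr hne
      have hvj : ∀ j, j ≤ i → 1 ≤ v j := fun j hj => le_trans hv4 (hmono j i hj)
      have hs' : ∀ j, max s (i+1) ≤ j → v j = 0 := fun j hj =>
        hs j (le_trans (le_max_left _ _) hj)
      rw [rhoV_eq_sum v _ hs'] at h
      have hsub : Finset.range (i+1) ⊆ Finset.range (max s (i+1)) :=
        Finset.range_subset_range.mpr (le_max_right _ _)
      have h1 : ∑ j ∈ Finset.range (i+1), rho (v j)
          ≤ ∑ j ∈ Finset.range (max s (i+1)), rho (v j) :=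
        Finset.sum_le_sum_of_subset_of_nonneg hsub (fun j _ _ => rho_nonneg _)
      have h2 : ∑ j ∈ Finset.range (i+1), (1:ℝ) ≤ ∑ j ∈ Finset.range (i+1), rho (v j) :=
        Finset.sum_le_sum (fun j hj => one_le_rho (hvj j (by
          simp only [Finset.mem_range] at hj; omega)))
      simp only [Finset.sum_const, Finset.card_range, nsmul_eq_mul, mul_one] at h2
      have : (5:ℝ) ≤ (i+1 : ℕ) := by exact_mod_cast by omega
      linarith
    have hsum : rho (v 0) + rho (v 1) + rho (v 2) + rho (v 3) = 4 := by
      rw [rhoV_eq_sum v 4 h4] at h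
      simpa [Finset.sum_range_succ] using h
    set a := v 0 with ha
    set b := v 1 with hb
    set c := v 2 with hc
    set d := v 3 with hd
    have hba : b ≤ a := hmono 0 1 (by omega)
    have hcb : c ≤ b := hmono 1 2 (by omega)
    have hdc : d ≤ c := hmono 2 3 (by omega)
    have ha2 := rho_lt_two a
    have hb2 := rho_lt_two b
    have hc2 := rho_lt_two c
    have hrba := rho_le_of_le hba
    have hrcb := rho_le_of_le hcb
    have hrdc := rho_le_of_le hdc
    by_cases hd1 : 1 ≤ d
    · -- all four ≥ 1, so all equal 1
      left
      have h1a : a = 1 := by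
        by_contra hne
        have : 2 ≤ a := by omega
        have hra : rho 2 ≤ rho a := rho_le_of_le this
        have : rho 2 = (4:ℝ)/3 := by norm_num [rho]
        have hb1 := one_le_rho (le_trans hd1 (le_trans hdc hcb))
        have hc1 := one_le_rho (le_trans hd1 hdc)
        have hd1' := one_le_rho hd1
        linarith
      have hall : b = 1 ∧ c = 1 ∧ d = 1 := by omega
      funext i
      match i with
      | 0 => exact h1a
      | 1 => exact hall.1
      | 2 => exact hall.2.1
      | 3 => exact hall.2.2
      | (n+4) => simpa [ofList, List.getD] using h4 (n+4) (by omega)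
    · -- d = 0
      have hd0 : d = 0 := by omega
      have hrd0 : rho d = 0 := by rw [hd0]; norm_num [rho]
      have hsum3 : rho a + rho b + rho c = 4 := by linarith
      have hc1 : 1 ≤ c := by
        by_contra hc0
        have : c = 0 := by omega
        have : rho c = 0 := by rw [this]; norm_num [rho]
        linarith
    -- c ≤ 2
      have hcle : c ≤ 2 := by
        by_contra hgt
        have : 3 ≤ c := by omega
        have : rho 3 ≤ rho c := rho_le_of_le this
        have h3 : rho 3 = (3:ℝ)/2 := by norm_num [rho]
        linarith
      have hib : rho 1 = (1:ℝ) := by norm_num [rho]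
      have hr2 : rho 2 = (4:ℝ)/3 := by norm_num [rho]
      have hr3 : rho 3 = (3:ℝ)/2 := by norm_num [rho]
      have hr5 : rho 5 = (5:ℝ)/3 := by norm_num [rho]
      interval_cases c
      · -- c = 1 : rho a + rho b = 3
        have hab3 : rho a + rho b = 3 := by linarith
        have hble : b ≤ 3 := by
          by_contra hgt
          have : 4 ≤ b := by omega
          have : rho 4 ≤ rho b := rho_le_of_le this
          have h4' : rho 4 = (8:ℝ)/5 := by norm_num [rho]
          linarith
        have hbge : 2 ≤ b := by
          by_contra hlt
          have hb1 : b ≤ 1 := by omega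
          have : rho b ≤ rho 1 := rho_le_of_le hb1
          linarith
        interval_cases b
        · -- b = 2 → rho a = 5/3 → a = 5
          right; right; right
          have haa : a = 5 := rho_inj (by linarith)
          funext i
          match i with
          | 0 => exact haa
          | 1 => exact hb ▸ rfl
          | 2 => exact hc ▸ rfl
          | (n+3) =>
            have : v (n+3) = 0 := by
              rcases Nat.eq_or_lt_of_le (show 3 ≤ n+3 by omega) with h' | h'
              · rw [← h']; exact hd0
              · exact Nat.le_antisymm (le_trans (hmono 3 (n+3) (by omega)) (by omega)) (by omega)
            simpa [ofList, List.getD] using this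
        · -- b = 3 → rho a = 3/2 → a = 3
          right; right; left
          have haa : a = 3 := rho_inj (by linarith)
          funext i
          match i with
          | 0 => exact haa
          | 1 => exact hb.symm
          | 2 => exact hc.symm
          | (n+3) =>
            have : v (n+3) = 0 :=
              Nat.le_antisymm (le_trans (hmono 3 (n+3) (by omega)) (by omega)) (by omega)
            simpa [ofList, List.getD] using this
      · -- c = 2 : rho a + rho b = 8/3
        have hab3 : rho a + rho b = 8/3 := by linarith
        have hble : b ≤ 2 := by
          by_contra hgt
          have : 3 ≤ b := by omega
          have : rho 3 ≤ rho b := rho_le_of_le this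
          linarith
        have hbe : b = 2 := by omega
        right; left
        have haa : a = 2 := rho_inj (by rw [hbe] at hab3; linarith)
        funext i
        match i with
        | 0 => exact haa
        | 1 => exact hbe
        | 2 => exact hc.symm
        | (n+3) =>
          have : v (n+3) = 0 :=
            Nat.le_antisymm (le_trans (hmono 3 (n+3) (by omega)) (by omega)) (by omega)
          simpa [ofList, List.getD] using this
  · intro h
    have key : ∀ l : List ℕ, v = ofList l → l.length ≤ 4 →
        rhoV v = ∑ i ∈ Finset.range 4, rho (ofList l i) := by
      intro l hl hlen
      rw [hl]
      exact rhoV_eq_sum _ 4 (fun i hi =>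
        List.getD_eq_default _ _ (le_trans hlen hi))
    rcases h with h | h | h | h <;>
      rw [key _ h (by simp)] <;>
      norm_num [ofList, Finset.sum_range_succ, rho]
end

section
/- Let φ : {1,2,3,…} → (0,∞) be increasing, convex and normalized, and let m < n be positive integers. If N(φ,n) = (K(φ,n))^ (i.e. φ is n-separating), then N(φ,m) = (K(φ,m))^ (i.e. φ is m-separating). -/
/-- The extension of `φ : {1,2,…} → ℝ` to `Ṽ`: `φ(v) = Σ_{i : v_i > 0} φ(v_i)`
(a finite sum since `v` is finitely supported). -/
noncomputable def phiV (phi : ℕ → ℝ) (v : ℕ → ℕ) : ℝ :=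
  ∑ᶠ (i : ℕ) (_ : v i ≠ 0), phi (v i)

/-- `K(φ,n) = {v ∈ Ṽ : φ(v) = n}`. -/
def Kset (phi : ℕ → ℝ) (n : ℕ) : Set (ℕ → ℕ) :=
  {v | IsVt v ∧ phiV phi v = n}

/-- `N(φ,n)`: the set of minimal elements of `{v ∈ Ṽ : φ(v) > n}` for the
coordinatewise partial order. -/
def Nset (phi : ℕ → ℝ) (n : ℕ) : Set (ℕ → ℕ) :=
  {w | (IsVt w ∧ phiV phi w > n) ∧
    ∀ v : ℕ → ℕ, IsVt v → phiV phi v > n → (∀ i, v i ≤ w i) → v = w}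

/-- `v̂`: the sequence `v` with its first (largest) entry increased by 1. -/
def vhat (v : ℕ → ℕ) : ℕ → ℕ := fun i => if i = 0 then v 0 + 1 else v i

/-- `ω(v)`: the width of `v`, the number of its nonzero entries. -/
noncomputable def width (v : ℕ → ℕ) : ℕ := Set.ncard {i | v i ≠ 0}

/-- `(1^r)`: the sequence consisting of `r` entries equal to `1`. -/
def onesV (r : ℕ) : ℕ → ℕ := fun i => if i < r then 1 else 0

/-- `X̂ = {x̂ : x ∈ X} ∪ {(1^{ω(X)+1})}`, where `ω(X) = max_{x ∈ X} ω(x)`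
(realized as `sSup (width '' X)`, which is the maximum for `X` finite nonempty). -/
noncomputable def hatSet (X : Set (ℕ → ℕ)) : Set (ℕ → ℕ) :=
  (vhat '' X) ∪ {onesV (sSup (width '' X) + 1)}

/-!
Extend `φ` by `φ(0) = 0` (`zeroExt`) and let `Δ(k) = φ(k+1) - φ(k)` (`incr`), so that
`Δ(0) = 1`. Separation at some `n ≥ 2` forces `Δ(1) ≤ 1`, so together with convexity `Δ` is
nonincreasing on all of `ℕ`. Lowering an entry `a` of `w ∈ Ṽ` by one lowers `φ(w)` by
`Δ(a-1) ≥ Δ(w₁-1)`, with equality at the last copy of the largest entry `w₁`; hence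
`w ∈ N(φ,c)` iff `c < φ(w) ≤ c + Δ(w₁-1)`. This criterion gives `K(φ,m)^ ⊆ N(φ,m)` at once.
Conversely, for `w ∈ N(φ,m)` with `w₁ ≥ 2`, appending `n - m` ones to `w` gives an element of
`N(φ,n) = K(φ,n)^`; this forces `φ(w) = m + Δ(w₁-1)` and `w₂ < w₁`, so `w = v̂` where
`v ∈ K(φ,m)` is `w` with `w₁` lowered by one.
-/

open Function Finset

def zeroExt (phi : ℕ → ℝ) : ℕ → ℝ := update phi 0 0

def incr (phi : ℕ → ℝ) (k : ℕ) : ℝ := zeroExt phi (k + 1) - zeroExt phi k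

section Sequences

variable {v w : ℕ → ℕ} {s : ℕ}

lemma update_eq_zero_of_le (hs : ∀ i, s ≤ i → w i = 0) (j b : ℕ) :
    ∀ i, max s (j + 1) ≤ i → update w j b i = 0 := fun i hi => by
  rw [update_of_ne (by omega)]
  exact hs i (by omega)

lemma vhat_eq_update : vhat v = update v 0 (v 0 + 1) := by
  funext i
  rcases eq_or_ne i 0 with rfl | hi
  · simp [vhat]
  · simp [vhat, hi]

lemma IsVt.antitone (hw : IsVt w) : Antitone w := hw.1

lemma isVt_onesV (r : ℕ) : IsVt (onesV r) :=
  ⟨fun i j hij => by simp only [onesV]; split_ifs <;> omega,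
    r, fun i hi => by simp [onesV, not_lt.2 hi]⟩

lemma IsVt.sup (hv : IsVt v) (hw : IsVt w) : IsVt (v ⊔ w) := by
  obtain ⟨s, hs⟩ := hv.2
  obtain ⟨t, ht⟩ := hw.2
  exact ⟨hv.antitone.sup hw.antitone, max s t, fun i hi => by
    simp [hs i (le_of_max_le_left hi), ht i (le_of_max_le_right hi)]⟩

lemma IsVt.update_of_bounds (hw : IsVt w) {j b : ℕ} (hleft : ∀ i < j, b ≤ w i)
    (hright : w (j + 1) ≤ b) : IsVt (update w j b) := by
  obtain ⟨s, hs⟩ := hw.2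
  refine ⟨antitone_nat_of_succ_le fun k => ?_, _, update_eq_zero_of_le hs j b⟩
  rcases eq_or_ne k j with rfl | hk
  · rwa [update_self, update_of_ne (by omega)]
  rw [update_of_ne hk]
  rcases eq_or_ne (k + 1) j with rfl | hk'
  · rw [update_self]
    exact hleft k k.lt_succ_self
  · rw [update_of_ne hk']
    exact hw.antitone k.le_succ

lemma IsVt.vhat (hw : IsVt w) : IsVt (vhat w) := by
  rw [vhat_eq_update]
  exact hw.update_of_bounds (by omega) ((hw.antitone (Nat.zero_le 1)).trans (Nat.le_succ _))

lemma IsVt.update_pred (hw : IsVt w) {j : ℕ} (hj : w (j + 1) < w j) :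
    IsVt (update w j (w j - 1)) :=
  hw.update_of_bounds (fun _ hi => (Nat.sub_le _ _).trans (hw.antitone hi.le)) (by omega)

lemma IsVt.exists_last_eq_head (hw : IsVt w) (h0 : w 0 ≠ 0) :
    ∃ j, w j = w 0 ∧ w (j + 1) < w 0 := by
  obtain ⟨s, hs⟩ := hw.2
  have hex : ∃ p, w p < w 0 := ⟨s, by rw [hs s le_rfl]; omega⟩
  have hp : Nat.find hex ≠ 0 := fun h => (Nat.find_spec hex).ne (by rw [h])
  refine ⟨Nat.find hex - 1,
    le_antisymm (hw.antitone (Nat.zero_le _)) (not_lt.1 (Nat.find_min hex (by omega))), ?_⟩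
  rw [Nat.sub_add_cancel (Nat.one_le_iff_ne_zero.2 hp)]
  exact Nat.find_spec hex

lemma IsVt.ne_zero_iff_lt_width (hw : IsVt w) (i : ℕ) : w i ≠ 0 ↔ i < width w := by
  obtain ⟨s, hs⟩ := hw.2
  have hex : ∃ t, w t = 0 := ⟨s, hs s le_rfl⟩
  have hsupp : {i | w i ≠ 0} = Set.Iio (Nat.find hex) := by
    ext i
    simp only [Set.mem_ofPred_eq, Set.mem_Iio]
    refine ⟨fun h => not_le.1 fun hi => h ?_, Nat.find_min hex⟩
    exact Nat.eq_zero_of_le_zero (Nat.find_spec hex ▸ hw.antitone hi)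
  rw [width, hsupp, Set.ncard_Iio_nat, ← Set.mem_Iio, ← hsupp]
  rfl

lemma IsVt.eq_zero_of_width_le (hw : IsVt w) {i : ℕ} (hi : width w ≤ i) : w i = 0 := by
  by_contra h
  exact not_lt.2 hi ((hw.ne_zero_iff_lt_width i).1 h)

lemma width_onesV (r : ℕ) : width (onesV r) = r := by
  have hsupp : {i | onesV r i ≠ 0} = Set.Iio r := by
    ext i
    simp [onesV]
  rw [width, hsupp, Set.ncard_Iio_nat]

lemma IsVt.eq_onesV_width (hw : IsVt w) (h : w 0 ≤ 1) : w = onesV (width w) := by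
  funext i
  have := hw.ne_zero_iff_lt_width i
  have := hw.antitone (Nat.zero_le i)
  simp only [onesV]
  split_ifs <;> omega

end Sequences

section Phi

variable {phi : ℕ → ℝ}
variable (hmono : ∀ m n : ℕ, 1 ≤ m → m < n → phi m < phi n)
variable (hconv : ∀ m n : ℕ, 1 ≤ m → m < n → phi (n + 1) - phi n < phi (m + 1) - phi m)
variable (hnorm : phi 1 = 1)
variable {u v w : ℕ → ℕ} {s : ℕ}

@[simp]
lemma zeroExt_zero : zeroExt phi 0 = 0 := update_self ..

lemma zeroExt_of_ne_zero {k : ℕ} (hk : k ≠ 0) : zeroExt phi k = phi k := update_of_ne hk ..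

include hnorm in
lemma incr_zero : incr phi 0 = 1 := by
  simp [incr, zeroExt_of_ne_zero one_ne_zero, hnorm]

lemma incr_of_ne_zero {k : ℕ} (hk : k ≠ 0) : incr phi k = phi (k + 1) - phi k := by
  rw [incr, zeroExt_of_ne_zero hk, zeroExt_of_ne_zero k.succ_ne_zero]

include hmono hnorm in
lemma incr_pos (k : ℕ) : 0 < incr phi k := by
  rcases eq_or_ne k 0 with rfl | hk
  · rw [incr_zero hnorm]; exact one_pos
  · rw [incr_of_ne_zero hk]
    exact sub_pos.2 (hmono k (k + 1) (Nat.one_le_iff_ne_zero.2 hk) k.lt_succ_self)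

include hmono hnorm in
lemma monotone_zeroExt : Monotone (zeroExt phi) :=
  monotone_nat_of_le_succ fun k => sub_nonneg.1 (incr_pos hmono hnorm k).le

include hconv hnorm in
lemma antitone_incr (h1 : incr phi 1 ≤ 1) : Antitone (incr phi) := by
  refine antitone_nat_of_succ_le fun k => ?_
  rcases eq_or_ne k 0 with rfl | hk
  · rwa [incr_zero hnorm]
  · rw [incr_of_ne_zero hk, incr_of_ne_zero k.succ_ne_zero]
    exact (hconv k (k + 1) (Nat.one_le_iff_ne_zero.2 hk) k.lt_succ_self).le

lemma phiV_eq_finsum (v : ℕ → ℕ) : phiV phi v = ∑ᶠ i, zeroExt phi (v i) := by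
  unfold phiV
  congr 1; funext i
  rw [finsum_eq_if]
  by_cases h : v i = 0 <;> simp [h, zeroExt_of_ne_zero]

lemma phiV_eq_sum_range (hs : ∀ i, s ≤ i → v i = 0) :
    phiV phi v = ∑ i ∈ range s, zeroExt phi (v i) := by
  rw [phiV_eq_finsum]
  refine finsum_eq_finsetSum_of_support_subset _ fun i hi => ?_
  rw [coe_range, Set.mem_Iio]
  by_contra h
  exact hi (by simp only [hs i (not_lt.1 h), zeroExt_zero])

lemma phiV_update (hs : ∀ i, s ≤ i → w i = 0) (j b : ℕ) :
    phiV phi (update w j b) = phiV phi w - zeroExt phi (w j) + zeroExt phi b := by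
  have hs' : ∀ i, max s (j + 1) ≤ i → w i = 0 := fun i hi => hs i (by omega)
  have hj : j ∈ range (max s (j + 1)) := mem_range.2 (by omega)
  rw [phiV_eq_sum_range (update_eq_zero_of_le hs j b), phiV_eq_sum_range hs']
  simp only [← comp_apply (f := zeroExt phi), comp_update]
  rw [sum_update_of_mem hj, sum_eq_add_sum_sdiff_singleton_of_mem hj]
  simp only [comp_apply]
  ring

lemma phiV_update_pred (hs : ∀ i, s ≤ i → w i = 0) {j : ℕ} (hj : w j ≠ 0) :
    phiV phi (update w j (w j - 1)) = phiV phi w - incr phi (w j - 1) := by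
  rw [phiV_update hs, incr, Nat.sub_add_cancel (Nat.one_le_iff_ne_zero.2 hj)]
  ring

lemma phiV_vhat (hs : ∀ i, s ≤ i → v i = 0) :
    phiV phi (vhat v) = phiV phi v + incr phi (v 0) := by
  rw [vhat_eq_update, phiV_update hs, incr]
  ring

include hmono hnorm in
lemma phiV_mono (hs : ∀ i, s ≤ i → w i = 0) (huw : u ≤ w) :
    phiV phi u ≤ phiV phi w := by
  rw [phiV_eq_sum_range (fun i hi => Nat.eq_zero_of_le_zero (hs i hi ▸ huw i)),
    phiV_eq_sum_range hs]
  exact sum_le_sum fun i _ => monotone_zeroExt hmono hnorm (huw i)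

include hnorm in
lemma phiV_onesV (r : ℕ) : phiV phi (onesV r) = r := by
  rw [phiV_eq_sum_range (s := r) fun i hi => by simp [onesV, not_lt.2 hi]]
  rw [sum_congr rfl fun i hi => by
    rw [onesV, if_pos (mem_range.1 hi), zeroExt_of_ne_zero one_ne_zero, hnorm]]
  simp

lemma phiV_eq_zero_of_head_eq_zero (hw : IsVt w) (h0 : w 0 = 0) : phiV phi w = 0 := by
  have hzero : ∀ i, 0 ≤ i → w i = 0 := fun i hi => Nat.eq_zero_of_le_zero (h0 ▸ hw.antitone hi)
  rw [phiV_eq_sum_range hzero, range_zero, sum_empty]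

include hnorm in
lemma phiV_sup_onesV (hw : IsVt w) (k : ℕ) :
    phiV phi (w ⊔ onesV (width w + k)) = phiV phi w + k := by
  have hsupp : ∀ i, width w + k ≤ i → (w ⊔ onesV (width w + k)) i = 0 := fun i hi => by
    simp [hw.eq_zero_of_width_le (by omega : width w ≤ i), onesV, not_lt.2 hi]
  rw [phiV_eq_sum_range hsupp, phiV_eq_sum_range fun i => hw.eq_zero_of_width_le, sum_range_add]
  congr 1
  · refine sum_congr rfl fun i hi => ?_
    have := (hw.ne_zero_iff_lt_width i).2 (mem_range.1 hi)
    rw [Pi.sup_apply, sup_of_le_left (by simp only [onesV]; split_ifs <;> omega)]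
  · have hone : ∀ i ∈ range k, zeroExt phi ((w ⊔ onesV (width w + k)) (width w + i)) = 1 :=
      fun i hi => by
        simp [hw.eq_zero_of_width_le (Nat.le_add_right _ i), onesV, mem_range.1 hi,
          zeroExt_of_ne_zero, hnorm]
    rw [sum_congr rfl hone, sum_const, card_range, nsmul_one]

include hmono hnorm in
lemma width_le_phiV (hw : IsVt w) : (width w : ℝ) ≤ phiV phi w := by
  rw [phiV_eq_sum_range fun i => hw.eq_zero_of_width_le]
  calc (width w : ℝ) = ∑ i ∈ range (width w), (1 : ℝ) := by simp
    _ ≤ _ := sum_le_sum fun i hi => ?_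
  have := (hw.ne_zero_iff_lt_width i).2 (mem_range.1 hi)
  calc (1 : ℝ) = zeroExt phi 1 := by rw [zeroExt_of_ne_zero one_ne_zero, hnorm]
    _ ≤ zeroExt phi (w i) := monotone_zeroExt hmono hnorm (Nat.one_le_iff_ne_zero.2 this)

include hmono hnorm in
lemma sSup_width_Kset (k : ℕ) : sSup (width '' Kset phi k) = k := by
  refine IsGreatest.csSup_eq ⟨⟨onesV k, ⟨isVt_onesV k, phiV_onesV hnorm k⟩, width_onesV k⟩, ?_⟩
  rintro _ ⟨v, ⟨hv, hφ⟩, rfl⟩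
  exact_mod_cast hφ ▸ width_le_phiV hmono hnorm hv

lemma head_ne_zero_of_mem_Nset {c : ℕ} (hw : w ∈ Nset phi c) : w 0 ≠ 0 := fun h0 => by
  have hgt := hw.1.2
  rw [phiV_eq_zero_of_head_eq_zero hw.1.1 h0] at hgt
  exact (Nat.cast_nonneg c).not_gt hgt

lemma phiV_sub_incr_le_of_mem_Nset {c : ℕ} (hw : w ∈ Nset phi c) {j : ℕ}
    (hj : w (j + 1) < w j) : phiV phi w - incr phi (w j - 1) ≤ c := by
  obtain ⟨⟨hwV, -⟩, hmin⟩ := hw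
  obtain ⟨s, hs⟩ := hwV.2
  rw [← phiV_update_pred hs (by omega : w j ≠ 0)]
  by_contra h
  have heq := hmin _ (hwV.update_pred hj) (not_le.1 h) (update_le_self_iff.2 (Nat.sub_le _ _))
  have := congrFun heq j
  rw [update_self] at this
  omega

include hmono hconv hnorm in
lemma phiV_le_sub_incr_of_lt (h1 : incr phi 1 ≤ 1) (hw : IsVt w) (huw : u < w) :
    phiV phi u ≤ phiV phi w - incr phi (w 0 - 1) := by
  obtain ⟨hle, j, hj⟩ := Pi.lt_def.1 huw
  obtain ⟨s, hs⟩ := hw.2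
  calc phiV phi u ≤ phiV phi (update w j (w j - 1)) :=
        phiV_mono hmono hnorm (update_eq_zero_of_le hs _ _)
          (le_update_iff.2 ⟨by omega, fun i _ => hle i⟩)
    _ = phiV phi w - incr phi (w j - 1) := phiV_update_pred hs (by omega)
    _ ≤ phiV phi w - incr phi (w 0 - 1) :=
        sub_le_sub_left (antitone_incr hconv hnorm h1 (Nat.sub_le_sub_right
          (hw.antitone (Nat.zero_le j)) 1)) _

include hmono hconv hnorm in
lemma mem_Nset_iff (h1 : incr phi 1 ≤ 1) (hw : IsVt w) (h0 : w 0 ≠ 0) (c : ℕ) :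
    w ∈ Nset phi c ↔ (c : ℝ) < phiV phi w ∧ phiV phi w - incr phi (w 0 - 1) ≤ c := by
  refine ⟨fun hN => ⟨hN.1.2, ?_⟩, fun ⟨hgt, hle⟩ => ⟨⟨hw, hgt⟩, fun u _ hu huw => ?_⟩⟩
  · obtain ⟨j, hj, hj1⟩ := hw.exists_last_eq_head h0
    simpa only [hj] using phiV_sub_incr_le_of_mem_Nset hN (j := j) (by omega)
  · by_contra hne
    have := phiV_le_sub_incr_of_lt hmono hconv hnorm h1 hw (lt_of_le_of_ne huw hne)
    linarith

include hnorm in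
/-- `(2, 1^(n-1)) = (1^n)^` lies in `N(φ,n)`, and dropping its last `1` leaves
`φ = n + incr phi 1 - 1`, which minimality keeps `≤ n`. -/
lemma incr_one_le_one_of_separating {n : ℕ} (hn : 2 ≤ n)
    (hsep : Nset phi n = hatSet (Kset phi n)) : incr phi 1 ≤ 1 := by
  have hK : onesV n ∈ Kset phi n := ⟨isVt_onesV n, phiV_onesV hnorm n⟩
  have hN : vhat (onesV n) ∈ Nset phi n := hsep ▸ Or.inl ⟨_, hK, rfl⟩
  have hlast : vhat (onesV n) (n - 1) = 1 := by
    simp only [vhat, onesV]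
    rw [if_neg (by omega), if_pos (by omega)]
  have hnext : vhat (onesV n) (n - 1 + 1) = 0 := by
    simp only [vhat, onesV]
    rw [if_neg (by omega), if_neg (by omega)]
  have := phiV_sub_incr_le_of_mem_Nset hN (by omega : vhat (onesV n) (n - 1 + 1) < _)
  obtain ⟨s, hs⟩ := (isVt_onesV n).2
  rw [phiV_vhat hs, hK.2] at this
  have hn0 : onesV n 0 = 1 := if_pos (by omega)
  rw [hn0, hlast, Nat.sub_self, incr_zero hnorm] at this
  linarith

include hmono hconv hnorm in
lemma vhat_mem_Nset (h1 : incr phi 1 ≤ 1) {m : ℕ} (hv : v ∈ Kset phi m) :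
    vhat v ∈ Nset phi m := by
  obtain ⟨s, hs⟩ := hv.1.2
  have h0 : vhat v 0 = v 0 + 1 := if_pos rfl
  rw [mem_Nset_iff hmono hconv hnorm h1 hv.1.vhat (by omega), phiV_vhat hs, hv.2, h0,
    Nat.add_sub_cancel]
  exact ⟨lt_add_of_pos_right _ (incr_pos hmono hnorm _), by simp⟩

include hmono hconv hnorm in
lemma onesV_mem_Nset (h1 : incr phi 1 ≤ 1) (m : ℕ) : onesV (m + 1) ∈ Nset phi m := by
  have h0 : onesV (m + 1) 0 = 1 := if_pos m.succ_pos
  rw [mem_Nset_iff hmono hconv hnorm h1 (isVt_onesV _) (by omega), phiV_onesV hnorm, h0,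
    Nat.sub_self, incr_zero hnorm]
  push_cast
  constructor <;> linarith

include hmono hconv hnorm in
lemma eq_onesV_of_mem_Nset (h1 : incr phi 1 ≤ 1) {m : ℕ} (hw : w ∈ Nset phi m)
    (hw0 : w 0 = 1) : w = onesV (m + 1) := by
  have hones := hw.1.1.eq_onesV_width hw0.le
  rw [mem_Nset_iff hmono hconv hnorm h1 hw.1.1 (by omega), hw0, Nat.sub_self, incr_zero hnorm,
    hones, phiV_onesV hnorm] at hw
  obtain ⟨hgt, hle⟩ := hw
  have hgt' : m < width w := by exact_mod_cast hgt
  have hle' : width w ≤ m + 1 := by exact_mod_cast (by linarith : (width w : ℝ) ≤ m + 1)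
  rw [hones, show width w = m + 1 by omega]

include hmono hconv hnorm in
lemma exists_vhat_eq_of_mem_Nset (h1 : incr phi 1 ≤ 1) {m n : ℕ} (hmn : m < n)
    (hsep : Nset phi n = hatSet (Kset phi n)) (hw : w ∈ Nset phi m)
    (hw0 : 2 ≤ w 0) : ∃ z ∈ Kset phi m, vhat z = w := by
  have hwV := hw.1.1
  obtain ⟨hgt, hle⟩ := (mem_Nset_iff hmono hconv hnorm h1 hwV (by omega) m).1 hw
  set w' := w ⊔ onesV (width w + (n - m))
  have hw'V : IsVt w' := hwV.sup (isVt_onesV _)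
  have hw'0 : w' 0 = w 0 := sup_of_le_left (by simp only [onesV]; split_ifs <;> omega)
  have hφ' : phiV phi w' = phiV phi w + (n - m) := by
    rw [phiV_sup_onesV hnorm hwV, Nat.cast_sub hmn.le]
  have hw'N : w' ∈ Nset phi n := by
    refine (mem_Nset_iff hmono hconv hnorm h1 hw'V (by omega) n).2 ⟨?_, ?_⟩
    · rw [hφ']; linarith
    · rw [hφ', hw'0]; linarith
  rw [hsep] at hw'N
  obtain ⟨v, ⟨hvV, hvφ⟩, hvw⟩ | hones := hw'N
  · have hv0 : v 0 + 1 = w 0 := by rw [← hw'0, ← hvw]; rfl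
    obtain ⟨s, hs⟩ := hwV.2
    obtain ⟨sv, hsv⟩ := hvV.2
    have hw1 : w 1 < w 0 := calc
      w 1 ≤ w' 1 := le_sup_left
      _ = v 1 := by rw [← hvw]; rfl
      _ ≤ v 0 := hvV.antitone (Nat.zero_le 1)
      _ < w 0 := by omega
    have hφw' : phiV phi w' = n + incr phi (w 0 - 1) := by
      rw [← hvw, phiV_vhat hsv, hvφ, ← hv0, Nat.add_sub_cancel]
    refine ⟨update w 0 (w 0 - 1), ⟨hwV.update_pred hw1, ?_⟩, ?_⟩
    · rw [phiV_update_pred hs (by omega)]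
      linarith
    · rw [vhat_eq_update, update_idem, update_self, Nat.sub_add_cancel (by omega), update_eq_self]
  · have := congrFun hones 0
    rw [hw'0] at this
    simp only [onesV] at this
    split_ifs at this <;> omega

end Phi

theorem separating_of_separating_lt_general (phi : ℕ → ℝ)
    (hmono : ∀ m n : ℕ, 1 ≤ m → m < n → phi m < phi n)
    (hconv : ∀ m n : ℕ, 1 ≤ m → m < n → phi (n + 1) - phi n < phi (m + 1) - phi m)
    (hnorm : phi 1 = 1)
    (m n : ℕ) (hm : 1 ≤ m) (hmn : m < n)
    (hsep : Nset phi n = hatSet (Kset phi n)) :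
    Nset phi m = hatSet (Kset phi m) := by
  have h1 : incr phi 1 ≤ 1 := incr_one_le_one_of_separating hnorm (by omega) hsep
  have hω : sSup (width '' Kset phi m) = m := sSup_width_Kset hmono hnorm m
  ext w
  constructor
  · intro hw
    have h0 := head_ne_zero_of_mem_Nset hw
    rcases (by omega : w 0 = 1 ∨ 2 ≤ w 0) with hw1 | hw2
    · right
      rw [Set.mem_singleton_iff, hω]
      exact eq_onesV_of_mem_Nset hmono hconv hnorm h1 hw hw1
    · obtain ⟨z, hz, rfl⟩ := exists_vhat_eq_of_mem_Nset hmono hconv hnorm h1 hmn hsep hw hw2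
      exact Or.inl ⟨z, hz, rfl⟩
  · rintro (⟨v, hv, rfl⟩ | hw)
    · exact vhat_mem_Nset hmono hconv hnorm h1 hv
    · rw [Set.mem_singleton_iff, hω] at hw
      exact hw ▸ onesV_mem_Nset hmono hconv hnorm h1 m

/-- Let `φ : {1,2,3,…} → (0,∞)` be increasing, convex and
normalized, and let `1 ≤ m < n`.  If `φ` is `n`-separating, i.e.
`N(φ,n) = (K(φ,n))^`, then `φ` is `m`-separating, i.e. `N(φ,m) = (K(φ,m))^`. -/
theorem separating_of_separating_lt (phi : ℕ → ℝ)
    (hpos : ∀ m : ℕ, 1 ≤ m → 0 < phi m)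
    (hmono : ∀ m n : ℕ, 1 ≤ m → m < n → phi m < phi n)
    (hconv : ∀ m n : ℕ, 1 ≤ m → m < n → phi (n + 1) - phi n < phi (m + 1) - phi m)
    (hnorm : phi 1 = 1)
    (m n : ℕ) (hm : 1 ≤ m) (hmn : m < n)
    (hsep : Nset phi n = hatSet (Kset phi n)) :
    Nset phi m = hatSet (Kset phi m) :=
  separating_of_separating_lt_general phi hmono hconv hnorm m n hm hmn hsep
end

section
/- For every integer n ≥ 5, the function ρ is not n-separating: N(ρ,n) ≠ (K(ρ,n))^. (For n = 5 this is witnessed by (2,2,2,2) ∈ N(ρ,5) \ (K(ρ,5))^.) -/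
lemma rho_zero' : rho 0 = 0 := by norm_num [rho]

/-- `phiV rho v` as a finite sum over an initial segment containing the support. -/
lemma phiV_rho_eq_sum (v : ℕ → ℕ) (m : ℕ) (h : ∀ i, m ≤ i → v i = 0) :
    phiV rho v = ∑ i ∈ Finset.range m, rho (v i) := by
  classical
  have h1 : ∀ i, (∑ᶠ (_ : v i ≠ 0), rho (v i)) = rho (v i) := by
    intro i
    rw [finsum_eq_if]
    by_cases hv : v i = 0
    · simp [hv, rho_zero']
    · simp [hv]
  have h2 : phiV rho v = ∑ᶠ i, rho (v i) := by
    unfold phiV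
    exact finsum_congr h1
  rw [h2]
  apply finsum_eq_finset_sum_of_support_subset
  intro i hi
  simp only [Finset.coe_range, Set.mem_Iio]
  by_contra hm
  push_neg at hm
  have : v i = 0 := h i hm
  simp [Function.mem_support, this, rho_zero'] at hi

lemma rho_mono_le {a b : ℕ} (hab : a ≤ b) (hb : b ≤ 2) : rho a ≤ rho b := by
  interval_cases b <;> interval_cases a <;> norm_num [rho]

lemma rho_gap {a b : ℕ} (hab : a < b) (hb : b ≤ 2) : rho a + 1/3 ≤ rho b := by
  interval_cases b <;> interval_cases a <;> norm_num [rho]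

/-- For every integer `n ≥ 5` the function `ρ` is **not**
`n`-separating: `N(ρ,n) ≠ (K(ρ,n))^`. -/
theorem rho_not_separating (n : ℕ) (hn : 5 ≤ n) :
    Nset rho n ≠ hatSet (Kset rho n) := by
  classical
  set w : ℕ → ℕ := fun i => if i < 4 then 2 else if i < n - 1 then 1 else 0 with hw
  have hw4 : ∀ i, i < 4 → w i = 2 := by intro i hi; simp [hw, hi]
  have hwsupp : ∀ i, n - 1 ≤ i → w i = 0 := by
    intro i hi; simp only [hw]; split_ifs <;> omega
  have hwle2 : ∀ i, w i ≤ 2 := by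
    intro i; simp only [hw]; split_ifs <;> omega
  -- value of phiV rho w
  have hval : phiV rho w = (n : ℝ) + 1/3 := by
    rw [phiV_rho_eq_sum w (n - 1) hwsupp]
    have hsplit : Finset.range (n - 1) = Finset.Ico 0 4 ∪ Finset.Ico 4 (n - 1) := by
      rw [Finset.range_eq_Ico, ← Finset.Ico_union_Ico_eq_Ico (by omega : (0:ℕ) ≤ 4) (by omega)]
    rw [hsplit, Finset.sum_union (by
      apply Finset.Ico_disjoint_Ico_consecutive)]
    have e1 : ∑ i ∈ Finset.Ico 0 4, rho (w i) = 4 * rho 2 := by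
      rw [Finset.sum_congr rfl (fun i hi => by
        rw [hw4 i (by simpa using (Finset.mem_Ico.mp hi).2)])]
      simp
    have e2 : ∑ i ∈ Finset.Ico 4 (n - 1), rho (w i) = ((n : ℝ) - 5) * rho 1 := by
      rw [Finset.sum_congr rfl (fun i hi => by
        have hi' := Finset.mem_Ico.mp hi
        have : w i = 1 := by simp only [hw]; split_ifs <;> omega
        rw [this])]
      rw [Finset.sum_const, Nat.card_Ico]
      have : ((n - 1 - 4 : ℕ) : ℝ) = (n : ℝ) - 5 := by
        have : n - 1 - 4 = n - 5 := by omega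
        rw [this]
        push_cast [Nat.cast_sub (by omega : 5 ≤ n)]
        ring
      rw [nsmul_eq_mul, this]
    rw [e1, e2]
    norm_num [rho]
    ring
  -- w ∈ Nset rho n
  have hwN : w ∈ Nset rho n := by
    refine ⟨⟨⟨?_, ⟨n - 1, hwsupp⟩⟩, ?_⟩, ?_⟩
    · intro i j hij; simp only [hw]; split_ifs <;> omega
    · rw [hval]; norm_num
    · intro v hv hvn hvle
      by_contra hne
      have hex : ∃ i, v i < w i := by
        by_contra hno
        push_neg at hno
        exact hne (funext fun i => le_antisymm (hvle i) (hno i))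
      obtain ⟨i0, hi0⟩ := hex
      have hi0m : i0 ∈ Finset.range (n - 1) := by
        rw [Finset.mem_range]
        by_contra hc
        push_neg at hc
        rw [hwsupp i0 hc] at hi0
        omega
      have hvsupp : ∀ i, n - 1 ≤ i → v i = 0 := by
        intro i hi
        have := hvle i
        rw [hwsupp i hi] at this
        omega
      have hvsum := phiV_rho_eq_sum v (n - 1) hvsupp
      have hbound : ∀ i ∈ Finset.range (n - 1), rho (v i) ≤ rho (w i) := by
        intro i _
        exact rho_mono_le (hvle i) (hwle2 i)
      have hwsum := phiV_rho_eq_sum w (n - 1) hwsupp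
      have hkey : phiV rho v + 1/3 ≤ phiV rho w := by
        rw [hvsum, hwsum]
        have hdiff : (1:ℝ)/3 ≤ ∑ i ∈ Finset.range (n - 1), (rho (w i) - rho (v i)) := by
          calc (1:ℝ)/3 ≤ rho (w i0) - rho (v i0) := by
                have := rho_gap hi0 (hwle2 i0); linarith
            _ ≤ ∑ i ∈ Finset.range (n - 1), (rho (w i) - rho (v i)) := by
                apply Finset.single_le_sum (fun i hi => by
                  have := hbound i hi; linarith) hi0m
        rw [Finset.sum_sub_distrib] at hdiff
        linarith
      rw [hval] at hkey
      linarith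
  -- w ∉ hatSet (Kset rho n)
  have hwH : w ∉ hatSet (Kset rho n) := by
    intro hmem
    rcases hmem with ⟨v, hvK, hveq⟩ | hone
    · have h0 : v 0 + 1 = w 0 := by
        have := congrFun hveq 0
        simpa [vhat] using this
      have h1 : v 1 = w 1 := by
        have := congrFun hveq 1
        simpa [vhat] using this
      have hw0 : w 0 = 2 := hw4 0 (by omega)
      have hw1 : w 1 = 2 := hw4 1 (by omega)
      have hmono := hvK.1.1 0 1 (by omega)
      omega
    · have := congrFun (Set.mem_singleton_iff.mp hone) 0
      have hw0 : w 0 = 2 := hw4 0 (by omega)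
      simp only [onesV] at this
      split_ifs at this <;> omega
  intro heq
  rw [heq] at hwN
  exact hwH hwN
end

section
/- Let k ≥ 1 be an integer, let u₀ = 0, u₁ = 1, u_{n+2} = (k+2)·u_{n+1} − u_n, and define ρ_k(n) = 1 + u_{n−1}/(u_n + 1) for integers n ≥ 1. Then with λ = (k+2+√(k²+4k))/2 one has ρ_k(n) = 1 + (λⁿ − λ)/(λ^{n+1} − 1) for every n ≥ 1. -/
/-- Let `k ≥ 1`, `u₀ = 0`, `u₁ = 1`,
`u_{n+2} = (k+2)·u_{n+1} − u_n`, and `ρ_k(n) = 1 + u_{n−1}/(u_n + 1)` for `n ≥ 1`.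
Then with `λ = (k+2+√(k²+4k))/2` one has `ρ_k(n) = 1 + (λⁿ − λ)/(λ^{n+1} − 1)`
for every `n ≥ 1`. -/
theorem rho_k_closed_form (k : ℕ) (hk : 1 ≤ k) (u : ℕ → ℝ)
    (hu0 : u 0 = 0) (hu1 : u 1 = 1)
    (hrec : ∀ n : ℕ, u (n + 2) = ((k : ℝ) + 2) * u (n + 1) - u n)
    (n : ℕ) (hn : 1 ≤ n) :
    1 + u (n - 1) / (u n + 1) =
      1 + ((((k : ℝ) + 2 + Real.sqrt ((k : ℝ) ^ 2 + 4 * (k : ℝ))) / 2) ^ n -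
             (((k : ℝ) + 2 + Real.sqrt ((k : ℝ) ^ 2 + 4 * (k : ℝ))) / 2)) /
          ((((k : ℝ) + 2 + Real.sqrt ((k : ℝ) ^ 2 + 4 * (k : ℝ))) / 2) ^ (n + 1) - 1) := by
  have hk1 : (1 : ℝ) ≤ (k : ℝ) := by exact_mod_cast hk
  set s : ℝ := Real.sqrt ((k : ℝ) ^ 2 + 4 * (k : ℝ)) with hs_def
  set L : ℝ := ((k : ℝ) + 2 + s) / 2 with hL_def
  have hs0 : 0 ≤ s := Real.sqrt_nonneg _
  have hs2 : s ^ 2 = (k : ℝ) ^ 2 + 4 * (k : ℝ) := Real.sq_sqrt (by positivity)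
  have hL1 : 1 < L := by rw [hL_def]; nlinarith
  have hL0 : 0 < L := lt_trans one_pos hL1
  have hL2 : L ^ 2 = ((k : ℝ) + 2) * L - 1 := by rw [hL_def]; nlinarith
  -- key closed form
  have key : ∀ m : ℕ, u m * ((L ^ 2 - 1) * L ^ m) = L ^ (2 * m + 1) - L := by
    intro m
    induction m using Nat.twoStepInduction with
    | zero => simp [hu0]
    | one => rw [hu1]; ring
    | more m ih1 ih2 =>
      rw [hrec]
      have : 2 * (m + 2) + 1 = (2 * m + 1) + 4 := by ring
      rw [this]
      have e1 : 2 * (m + 1) + 1 = (2 * m + 1) + 2 := by ring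
      rw [e1] at ih2
      linear_combination (((k : ℝ) + 2) * L) * ih2 - L ^ 2 * ih1 -
        (L ^ (2 * m + 1 + 2) - L) * hL2
  -- nonnegativity of u
  have upos : ∀ m : ℕ, 0 ≤ u m := by
    intro m
    have h1 := key m
    have hc : 0 < (L ^ 2 - 1) * L ^ m := by
      have : 1 < L ^ 2 := by nlinarith
      have := pow_pos hL0 m
      nlinarith
    have hr : (0 : ℝ) ≤ L ^ (2 * m + 1) - L := by
      have : L ^ 1 ≤ L ^ (2 * m + 1) := pow_le_pow_right₀ (le_of_lt hL1) (by omega)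
      simpa using this
    by_contra h
    push_neg at h
    nlinarith [mul_neg_of_neg_of_pos h hc]
  obtain ⟨m, rfl⟩ : ∃ m, n = m + 1 := ⟨n - 1, (Nat.succ_pred_eq_of_pos hn).symm⟩
  simp only [Nat.add_sub_cancel]
  congr 1
  have hden1 : u (m + 1) + 1 ≠ 0 := by have := upos (m + 1); positivity
  have hden2 : L ^ (m + 1 + 1) - 1 ≠ 0 := by
    have : 1 < L ^ (m + 2) := one_lt_pow₀ hL1 (by omega)
    intro h; nlinarith
  rw [div_eq_div_iff hden1 hden2]
  -- cross-multiplied identity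
  have hc : ((L ^ 2 - 1) * L ^ (m + 1)) ≠ 0 := by
    have h1 : 1 < L ^ 2 := by nlinarith
    have h2 := pow_pos hL0 (m + 1)
    nlinarith
  apply mul_right_cancel₀ hc
  have k1 := key m
  have k2 := key (m + 1)
  linear_combination (L * (L ^ (m + 2) - 1)) * k1 - (L ^ (m + 1) - L) * k2
end

section
/- For all integers k ≥ 0 and n ≥ 0 the inequality ρ_k(n) + k·ρ_k(∞) < (k+1)·ρ_k(n+1) holds, where ρ_k(∞) = 1 + 2/(k + 2 + √(k² + 4k)). -/
/-!
Write `ρ_k(n) = 1 + x n` with `x n = u (n - 1) / (u n + 1)`, and `b = ρ_k(∞) - 1`, the smaller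
root of `b² = (k + 2) b - 1`. The claim becomes `k (b - x (n + 1)) < x (n + 1) - x n`.
Cassini's identity `u n ^ 2 - u (n - 1) u (n + 1) = 1` gives
`x (n + 1) - x n = (1 + u n - u (n - 1)) / ((u n + 1) (u (n + 1) + 1))`,
and `b u n - u (n - 1) = bⁿ` gives `b - x (n + 1) = b (1 + bⁿ) / (u (n + 1) + 1)`.
Since `bⁿ ≤ b`, the claim then follows from `k b < 1` and `b + k b (1 + b) ≤ 1`,
both consequences of `k ≤ √(k² + 4k)`.
-/

open Real

section LinearRecurrence

variable {t : ℝ} {u : ℕ → ℝ}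

theorem recurrence_cassini (hrec : ∀ n, u (n + 2) = t * u (n + 1) - u n) (m : ℕ) :
    u (m + 1) ^ 2 - u m * u (m + 2) = u 1 ^ 2 - u 0 * u 2 := by
  induction m with
  | zero => rfl
  | succ m ih =>
    rw [← ih, hrec (m + 1)]
    linear_combination u (m + 2) * hrec m

theorem recurrence_root_mul_sub {b : ℝ} (hrec : ∀ n, u (n + 2) = t * u (n + 1) - u n)
    (hb : b ^ 2 = t * b - 1) (m : ℕ) :
    b * u (m + 1) - u m = b ^ m * (b * u 1 - u 0) := by
  induction m with
  | zero => ring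
  | succ m ih =>
    rw [hrec m, pow_succ]
    linear_combination b * ih - u (m + 1) * hb

theorem recurrence_nonneg (hrec : ∀ n, u (n + 2) = t * u (n + 1) - u n) (ht : 2 ≤ t)
    (h0 : 0 ≤ u 0) (h01 : u 0 ≤ u 1) (m : ℕ) : 0 ≤ u m := by
  suffices ∀ m, 0 ≤ u m ∧ u m ≤ u (m + 1) from (this m).1
  intro m
  induction m with
  | zero => exact ⟨h0, h01⟩
  | succ m ih =>
    obtain ⟨hm, hmono⟩ := ih
    refine ⟨hm.trans hmono, ?_⟩
    rw [hrec m]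
    nlinarith

end LinearRecurrence

section SmallRoot

noncomputable def smallRoot (k : ℝ) : ℝ := 2 / (k + 2 + √(k ^ 2 + 4 * k))

variable {k : ℝ}

theorem sq_sqrt_disc (hk : 0 ≤ k) : √(k ^ 2 + 4 * k) ^ 2 = k ^ 2 + 4 * k :=
  sq_sqrt (by positivity)

theorem le_sqrt_disc (hk : 0 ≤ k) : k ≤ √(k ^ 2 + 4 * k) :=
  le_sqrt_of_sq_le (by linarith)

theorem smallRoot_pos (hk : 0 ≤ k) : 0 < smallRoot k := by
  unfold smallRoot; positivity

theorem smallRoot_le_one (hk : 0 ≤ k) : smallRoot k ≤ 1 := by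
  unfold smallRoot
  rw [div_le_one (by positivity)]
  linarith [sqrt_nonneg (k ^ 2 + 4 * k)]

theorem smallRoot_sq (hk : 0 ≤ k) : smallRoot k ^ 2 = (k + 2) * smallRoot k - 1 := by
  have hs := sq_sqrt_disc hk
  have hs0 := sqrt_nonneg (k ^ 2 + 4 * k)
  unfold smallRoot
  generalize √(k ^ 2 + 4 * k) = s at hs hs0 ⊢
  have hD : k + 2 + s ≠ 0 := by positivity
  field_simp
  linear_combination hs

theorem mul_smallRoot_lt_one (hk : 0 ≤ k) : k * smallRoot k < 1 := by
  unfold smallRoot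
  rw [mul_div_assoc', div_lt_one (by positivity)]
  linarith [le_sqrt_disc hk]

theorem smallRoot_add_mul_le_one (hk : 0 ≤ k) :
    smallRoot k + k * smallRoot k * (1 + smallRoot k) ≤ 1 := by
  have hs := sq_sqrt_disc hk
  have hks := le_sqrt_disc hk
  unfold smallRoot
  generalize √(k ^ 2 + 4 * k) = s at hs hks ⊢
  have hD : 0 < k + 2 + s := by linarith
  rw [← sub_nonneg]
  field_simp
  nlinarith

end SmallRoot

theorem mul_smallRoot_sub_ratio_lt_ratio_sub_ratio {k : ℝ} {u : ℕ → ℝ} (hk : 0 ≤ k)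
    (hu0 : u 0 = 0) (hu1 : u 1 = 1) (hrec : ∀ n, u (n + 2) = (k + 2) * u (n + 1) - u n)
    (m : ℕ) :
    k * (smallRoot k - u (m + 1) / (u (m + 2) + 1)) <
      u (m + 1) / (u (m + 2) + 1) - u m / (u (m + 1) + 1) := by
  set b := smallRoot k
  have hnonneg := recurrence_nonneg hrec (by linarith) hu0.ge (by rw [hu0, hu1]; exact zero_le_one)
  have hcassini : u (m + 1) ^ 2 - u m * u (m + 2) = 1 := by
    simpa [hu0, hu1] using recurrence_cassini hrec m
  have hroot (j : ℕ) : b * u (j + 1) - u j = b ^ (j + 1) := by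
    simpa [hu0, hu1, pow_succ] using recurrence_root_mul_sub hrec (smallRoot_sq hk) j
  have hq : b * u (m + 2) - u (m + 1) = b * b ^ (m + 1) := by rw [hroot, pow_succ, mul_comm]
  have hp := hroot m
  set q := b ^ (m + 1)
  set A := u m
  set B := u (m + 1)
  set C := u (m + 2)
  have hB : 0 ≤ B := hnonneg (m + 1)
  have hC : 0 ≤ C := hnonneg (m + 2)
  have hB1 : B + 1 ≠ 0 := by positivity
  have hC1 : C + 1 ≠ 0 := by positivity
  have hgap : B / (C + 1) - A / (B + 1) = (1 + B - A) / ((B + 1) * (C + 1)) := by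
    field_simp
    linear_combination hcassini
  have hdist : b - B / (C + 1) = b * (1 + q) / (C + 1) := by
    field_simp
    linear_combination hq
  have hb0 := smallRoot_pos hk
  have hq0 : 0 ≤ q := by positivity
  have hqb : q ≤ b := pow_le_of_le_one hb0.le (smallRoot_le_one hk) m.succ_ne_zero
  rw [hgap, hdist, mul_div_assoc', div_lt_div_iff₀ (by positivity) (by positivity)]
  suffices k * b * (1 + q) * (B + 1) < 1 + B - A by nlinarith
  calc k * b * (1 + q) * (B + 1) = k * b * (1 + q) + k * b * (1 + q) * B := by ring
    _ < (1 + q) + (1 - b) * B := by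
      have hkb : k * b * (1 + q) < 1 + q := by nlinarith [mul_smallRoot_lt_one hk]
      have hkbB : k * b * (1 + q) ≤ 1 - b := by
        have : k * b * (1 + q) ≤ k * b * (1 + b) := by gcongr
        linarith [smallRoot_add_mul_le_one hk]
      exact add_lt_add_of_lt_of_le hkb (mul_le_mul_of_nonneg_right hkbB hB)
    _ = 1 + B - A := by linear_combination -hp

/-- For all integers `k ≥ 0` and `n ≥ 0` one has
`ρ_k(n) + k·ρ_k(∞) < (k+1)·ρ_k(n+1)`, where `ρ_k(∞) = 1 + 2/(k + 2 + √(k² + 4k))`,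
`ρ_k(0) = 0` and `ρ_k(n) = 1 + u_{n−1}/(u_n + 1)` for `n ≥ 1`, with `u₀ = 0`,
`u₁ = 1`, `u_{n+2} = (k+2)·u_{n+1} − u_n`. -/
theorem rho_k_convexity_inequality (k : ℕ) (u : ℕ → ℝ)
    (hu0 : u 0 = 0) (hu1 : u 1 = 1)
    (hrec : ∀ n : ℕ, u (n + 2) = ((k : ℝ) + 2) * u (n + 1) - u n)
    (rk : ℕ → ℝ) (hrk0 : rk 0 = 0)
    (hrk : ∀ n : ℕ, 1 ≤ n → rk n = 1 + u (n - 1) / (u n + 1))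
    (n : ℕ) :
    rk n + (k : ℝ) * (1 + 2 / ((k : ℝ) + 2 + Real.sqrt ((k : ℝ) ^ 2 + 4 * (k : ℝ)))) <
      ((k : ℝ) + 1) * rk (n + 1) := by
  have hk : (0 : ℝ) ≤ k := k.cast_nonneg
  change rk n + k * (1 + smallRoot k) < (k + 1) * rk (n + 1)
  rcases n with _ | m
  · rw [hrk0, hrk 1 le_rfl, Nat.sub_self, hu0, zero_div, add_zero]
    linarith [mul_smallRoot_lt_one hk]
  · have hm1 : rk (m + 1) = 1 + u m / (u (m + 1) + 1) := hrk (m + 1) m.succ_pos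
    have hm2 : rk (m + 2) = 1 + u (m + 1) / (u (m + 2) + 1) := hrk (m + 2) (m + 1).succ_pos
    rw [hm1, hm2]
    linarith [mul_smallRoot_sub_ratio_lt_ratio_sub_ratio hk hu0 hu1 hrec m]
end

section
/- For every integer k ≥ 0, the set of solutions v ∈ Ṽ of ρ_k(v) = k + 4 is exactly {(1^{k+4}), (2^{k+3}), (3^{k+2}, 1), (5^{k+1}, 2, 1)}. -/
/-- The recurrent sequence `u₀ = 0`, `u₁ = 1`, `u_{n+2} = (k+2)·u_{n+1} − u_n`. -/
noncomputable def useq (k : ℕ) : ℕ → ℝ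
  | 0 => 0
  | 1 => 1
  | n + 2 => ((k : ℝ) + 2) * useq k (n + 1) - useq k n

/-- `ρ_k(0) = 0` and `ρ_k(n) = 1 + u_{n−1}/(u_n + 1)` for `n ≥ 1`
(for `k = 0` this is `ρ(n) = 1 + (n−1)/(n+1)`). -/
noncomputable def rhok (k : ℕ) (n : ℕ) : ℝ :=
  if n = 0 then 0 else 1 + useq k (n - 1) / (useq k n + 1)

/-- The extension of `ρ_k` to `Ṽ`: `ρ_k(v) = Σ_i ρ_k(v_i)`, a finite sum since
`ρ_k(0) = 0` and `v` is finitely supported. -/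
noncomputable def rhokV (k : ℕ) (v : ℕ → ℕ) : ℝ := ∑ᶠ i, rhok k (v i)

/-!
Write `q = k + 2`. From `(q² - 2) u_n ≤ q u_{n+1}` one gets `1 ≤ ρ_k(n) < 1 + q/(q² - 2)` for
`n ≥ 1`, with equality only at `n = 1`; also `ρ_k(2) = 1 + 1/(q + 1)` and
`ρ_k(n) ≥ ρ_k(3) = 1 + 1/q` for `n ≥ 3`, with equality only at `n = 3`. Hence a solution has either
`k + 4` nonzero parts, all equal to `1`, or `k + 3` of them; in the latter case, with `a` parts `1`,
`b` parts `2` and `c` parts `≥ 3`, these bounds leave only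
`(a, b, c) ∈ {(0, k+3, 0), (1, 0, k+2), (1, 1, k+1)}`, and for `c = k + 2` all large parts are `3`.
For `c = k + 1` the large parts average exactly `ρ_k(5)`: a part `3` or `4` falls short of `ρ_k(5)`
by at least `δ = ρ_k(5) - ρ_k(4)`, while the at most `k` parts `≥ 6` exceed it by less than `δ` in
total (using `u_{n+3} ≥ (q - 2/q)³ u_n`), so every large part is `5`.
-/

section Sequence

variable {k : ℕ}

lemma useq_add_two (n : ℕ) : useq k (n + 2) = (k + 2 : ℝ) * useq k (n + 1) - useq k n := by
  rw [useq]

lemma useq_one : useq k 1 = 1 := by rw [useq]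

lemma useq_two : useq k 2 = k + 2 := by simp only [useq]; ring

lemma useq_three : useq k 3 = (k + 1) * (k + 3) := by simp only [useq]; ring

lemma useq_nonneg_and_add_one_le (n : ℕ) : 0 ≤ useq k n ∧ useq k n + 1 ≤ useq k (n + 1) := by
  induction n with
  | zero => simp only [useq]; norm_num
  | succ n ih =>
    have hk : (0 : ℝ) ≤ k := Nat.cast_nonneg k
    refine ⟨by linarith, ?_⟩
    rw [useq_add_two]
    nlinarith

lemma useq_nonneg (n : ℕ) : 0 ≤ useq k n := (useq_nonneg_and_add_one_le n).1

lemma useq_add_one_pos (n : ℕ) : 0 < useq k n + 1 := by linarith [useq_nonneg (k := k) n]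

lemma one_le_useq (n : ℕ) : 1 ≤ useq k (n + 1) := by
  linarith [(useq_nonneg_and_add_one_le (k := k) n).2, useq_nonneg (k := k) n]

lemma useq_mono : Monotone (useq k) :=
  monotone_nat_of_le_succ fun n => by linarith [(useq_nonneg_and_add_one_le (k := k) n).2]

lemma mul_useq_le (n : ℕ) : (k ^ 2 + 4 * k + 2 : ℝ) * useq k n ≤ (k + 2) * useq k (n + 1) := by
  induction n with
  | zero => simp only [useq, mul_zero, mul_one]; positivity
  | succ n ih =>
    have hk : (0 : ℝ) ≤ k := Nat.cast_nonneg k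
    rw [useq_add_two]
    nlinarith [useq_nonneg (k := k) n, useq_nonneg (k := k) (n + 1)]

lemma pow_mul_useq_le (j n : ℕ) :
    (k ^ 2 + 4 * k + 2 : ℝ) ^ j * useq k n ≤ (k + 2 : ℝ) ^ j * useq k (n + j) := by
  induction j with
  | zero => simp
  | succ j ih =>
    calc (k ^ 2 + 4 * k + 2 : ℝ) ^ (j + 1) * useq k n
        = (k ^ 2 + 4 * k + 2 : ℝ) * ((k ^ 2 + 4 * k + 2 : ℝ) ^ j * useq k n) := by ring
      _ ≤ (k ^ 2 + 4 * k + 2 : ℝ) * ((k + 2 : ℝ) ^ j * useq k (n + j)) :=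
        mul_le_mul_of_nonneg_left ih (by positivity)
      _ ≤ (k + 2 : ℝ) ^ j * ((k + 2) * useq k (n + j + 1)) := by
        rw [mul_left_comm]; exact mul_le_mul_of_nonneg_left (mul_useq_le _) (by positivity)
      _ = (k + 2 : ℝ) ^ (j + 1) * useq k (n + (j + 1)) := by ring_nf

end Sequence

section Rho

variable {k : ℕ}

lemma rhok_succ (n : ℕ) : rhok k (n + 1) = 1 + useq k n / (useq k (n + 1) + 1) := by
  simp [rhok]

lemma rhok_one : rhok k 1 = 1 := by simp [rhok_succ, useq]

lemma rhok_two : rhok k 2 = 1 + 1 / (k + 3) := by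
  rw [rhok_succ, useq_one, useq_two]; ring

lemma rhok_three : rhok k 3 = 1 + 1 / (k + 2) := by
  rw [rhok_succ, useq_two, useq_three]; field_simp; ring

lemma rhok_four : rhok k 4 = 1 + (k + 3) / (k ^ 2 + 5 * k + 5) := by
  have hu4 : useq k 4 + 1 = (k + 1) * (k ^ 2 + 5 * k + 5) := by simp only [useq]; ring
  rw [rhok_succ, hu4, useq_three, mul_div_mul_left _ _ (by positivity)]

lemma rhok_five : rhok k 5 = 1 + (k + 2) / ((k + 1) * (k + 3)) := by
  have hu4 : useq k 4 = (k + 2) * (k ^ 2 + 4 * k + 2) := by simp only [useq]; ring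
  have hu5 : useq k 5 + 1 = (k + 1) * (k + 3) * (k ^ 2 + 4 * k + 2) := by simp only [useq]; ring
  rw [rhok_succ, hu5, hu4, mul_div_mul_right _ _ (by positivity)]

lemma one_le_rhok {n : ℕ} (hn : n ≠ 0) : 1 ≤ rhok k n := by
  obtain ⟨j, rfl⟩ := Nat.exists_eq_succ_of_ne_zero hn
  rw [rhok_succ, le_add_iff_nonneg_right]
  exact div_nonneg (useq_nonneg j) (useq_add_one_pos _).le

lemma one_lt_rhok {n : ℕ} (hn : 2 ≤ n) : 1 < rhok k n := by
  obtain ⟨j, rfl⟩ := Nat.exists_eq_add_of_le' hn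
  rw [rhok_succ, lt_add_iff_pos_right]
  exact div_pos (one_pos.trans_le (one_le_useq j)) (useq_add_one_pos _)

lemma rhok_lt {n : ℕ} (hn : n ≠ 0) : rhok k n < 1 + (k + 2) / (k ^ 2 + 4 * k + 2) := by
  obtain ⟨j, rfl⟩ := Nat.exists_eq_succ_of_ne_zero hn
  rw [rhok_succ, add_lt_add_iff_left, div_lt_div_iff₀ (useq_add_one_pos _) (by positivity)]
  nlinarith [mul_useq_le (k := k) j]

lemma rhok_lt_one_add_inv {n : ℕ} (hn : n ≠ 0) : rhok k n < 1 + 1 / (k + 1) := by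
  refine (rhok_lt hn).trans_le ?_
  rw [add_le_add_iff_left, div_le_div_iff₀ (by positivity) (by positivity)]
  nlinarith [(Nat.cast_nonneg k : (0 : ℝ) ≤ k)]

lemma rhok_add_two_sub_rhok_three (n : ℕ) :
    rhok k (n + 2) - rhok k 3 = (useq k n - 1) / ((k + 2) * (useq k (n + 2) + 1)) := by
  have hd := (useq_add_one_pos (k := k) (n + 2)).ne'
  rw [rhok_succ, rhok_three]
  field_simp
  rw [useq_add_two]
  ring

lemma rhok_add_three_sub_rhok_five (n : ℕ) : rhok k (n + 3) - rhok k 5 =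
    (useq k n - (k + 2)) / ((k + 1) * (k + 3) * (useq k (n + 3) + 1)) := by
  have hd := (useq_add_one_pos (k := k) (n + 3)).ne'
  rw [rhok_succ, rhok_five]
  field_simp
  rw [useq_add_two (n + 1), useq_add_two n]
  ring

lemma rhok_three_le {n : ℕ} (hn : 3 ≤ n) : rhok k 3 ≤ rhok k n := by
  obtain ⟨j, rfl⟩ := Nat.exists_eq_add_of_le' hn
  rw [← sub_nonneg, rhok_add_two_sub_rhok_three]
  have hu := one_le_useq (k := k) j
  exact div_nonneg (by linarith) (mul_pos (by positivity) (useq_add_one_pos _)).le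

lemma rhok_three_lt {n : ℕ} (hn : 4 ≤ n) : rhok k 3 < rhok k n := by
  obtain ⟨j, rfl⟩ := Nat.exists_eq_add_of_le' hn
  rw [← sub_pos, rhok_add_two_sub_rhok_three]
  have hu : useq k 2 ≤ useq k (j + 2) := useq_mono (by omega)
  rw [useq_two] at hu
  exact div_pos (by linarith) (mul_pos (by positivity) (useq_add_one_pos _))

lemma rhok_five_lt {n : ℕ} (hn : 6 ≤ n) : rhok k 5 < rhok k n := by
  obtain ⟨j, rfl⟩ := Nat.exists_eq_add_of_le' hn
  rw [← sub_pos, rhok_add_three_sub_rhok_five]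
  have hu : useq k 3 ≤ useq k (j + 3) := useq_mono (by omega)
  rw [useq_three] at hu
  exact div_pos (by nlinarith) (mul_pos (by positivity) (useq_add_one_pos _))

lemma rhok_le_rhok_five_add {n : ℕ} (hn : 6 ≤ n) :
    rhok k n ≤ rhok k 5 + (k + 2) ^ 3 / ((k ^ 2 + 4 * k + 2) ^ 3 * ((k + 1) * (k + 3))) := by
  obtain ⟨j, rfl⟩ := Nat.exists_eq_add_of_le' hn
  rw [← sub_le_iff_le_add', rhok_add_three_sub_rhok_five,
    div_le_div_iff₀ (mul_pos (by positivity) (useq_add_one_pos _)) (by positivity)]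
  have hC : (0 : ℝ) ≤ (k + 1) * (k + 3) := by positivity
  nlinarith [mul_le_mul_of_nonneg_right (pow_mul_useq_le (k := k) 3 (j + 3)) hC,
    mul_nonneg (by positivity : (0 : ℝ) ≤ (k + 2) * (k ^ 2 + 4 * k + 2) ^ 3) hC,
    mul_nonneg (by positivity : (0 : ℝ) ≤ (k + 2) ^ 3) hC]

lemma rhok_add_le_rhok_five {n : ℕ} (hn3 : 3 ≤ n) (hn4 : n ≤ 4) :
    rhok k n + 1 / ((k + 1) * (k + 3) * (k ^ 2 + 5 * k + 5)) ≤ rhok k 5 := by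
  interval_cases n
  · rw [rhok_three, rhok_five]
    field_simp
    nlinarith [(Nat.cast_nonneg k : (0 : ℝ) ≤ k)]
  · rw [rhok_four, rhok_five]
    apply le_of_eq
    field_simp
    ring

lemma mul_excess_lt_deficit (k : ℕ) :
    (k : ℝ) * ((k + 2) ^ 3 / ((k ^ 2 + 4 * k + 2) ^ 3 * ((k + 1) * (k + 3)))) <
      1 / ((k + 1) * (k + 3) * (k ^ 2 + 5 * k + 5)) := by
  rw [mul_div_assoc', div_lt_div_iff₀ (by positivity) (by positivity)]
  have key : (0 : ℝ) < (k ^ 2 + 4 * k + 2) ^ 3 - k * (k + 2) ^ 3 * (k ^ 2 + 5 * k + 5) := by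
    ring_nf; positivity
  nlinarith [mul_pos key (by positivity : (0 : ℝ) < (k + 1) * (k + 3))]

end Rho

namespace Multiset

variable {α : Type*} {s : Multiset α} {f : α → ℝ} {a : α} {b : ℝ}

theorem card_mul_le_sum_map (h : ∀ x ∈ s, b ≤ f x) : card s * b ≤ (s.map f).sum := by
  simpa using sum_map_le_sum_map (fun _ => b) f h

theorem sum_map_le_card_mul (h : ∀ x ∈ s, f x ≤ b) : (s.map f).sum ≤ card s * b := by
  simpa using sum_map_le_sum_map f (fun _ => b) h

theorem sum_map_lt_card_mul (hs : s ≠ 0) (h : ∀ x ∈ s, f x < b) : (s.map f).sum < card s * b := by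
  simpa using sum_lt_sum_of_nonempty (g := fun _ => b) hs h

theorem eq_replicate_of_sum_map_eq (hle : ∀ x ∈ s, f a ≤ f x) (heq : ∀ x ∈ s, f x = f a → x = a)
    (hsum : (s.map f).sum = card s * f a) : s = replicate (card s) a := by
  refine eq_replicate.2 ⟨rfl, fun x hx => heq x hx ?_⟩
  by_contra hne
  have hlt : (s.map fun _ => f a).sum < (s.map f).sum :=
    sum_lt_sum hle ⟨x, hx, lt_of_le_of_ne (hle x hx) (Ne.symm hne)⟩
  simp [hsum] at hlt

theorem eq_replicate_of_sum_map_eq_of_gap {n : ℕ} {δ K : ℝ} (hcard : card s ≤ n + 1)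
    (hK : 0 ≤ K) (hKδ : n * K < δ) (hup : ∀ x ∈ s, f x ≤ f a + K)
    (hgap : ∀ x ∈ s, f x < f a → f x + δ ≤ f a) (heq : ∀ x ∈ s, f x = f a → x = a)
    (hsum : (s.map f).sum = card s * f a) : s = replicate (card s) a := by
  refine eq_replicate_of_sum_map_eq (fun x hx => ?_) heq hsum
  by_contra! hlt
  obtain ⟨t, rfl⟩ := exists_cons_of_mem hx
  have ht : (t.map f).sum ≤ card t * (f a + K) :=
    sum_map_le_card_mul fun y hy => hup y (mem_cons_of_mem hy)
  have hcardt : (card t : ℝ) ≤ n := by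
    rw [card_cons] at hcard; exact_mod_cast Nat.le_of_succ_le_succ hcard
  have hx_gap := hgap x (mem_cons_self x t) hlt
  rw [map_cons, sum_cons, card_cons, Nat.cast_succ] at hsum
  nlinarith

theorem eq_replicate_one_add_replicate_two_add_filter {s : Multiset ℕ} (hs : 0 ∉ s) :
    s = replicate (count 1 s) 1 + replicate (count 2 s) 2 + s.filter (3 ≤ ·) := by
  ext x
  simp only [count_add, count_replicate, count_filter]
  rcases x with _ | _ | _ | x
  · simpa using hs
  all_goals simp

end Multiset

section Classification

open Multiset

variable {k : ℕ}

lemma card_eq_of_sum_map_rhok_eq {s : Multiset ℕ} (hs : 0 ∉ s)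
    (h : (s.map (rhok k)).sum = k + 4) : card s = k + 3 ∨ card s = k + 4 := by
  have hne : ∀ x ∈ s, x ≠ 0 := fun x hx h0 => hs (h0 ▸ hx)
  have hle : (card s : ℝ) * 1 ≤ k + 4 :=
    h ▸ card_mul_le_sum_map fun x hx => one_le_rhok (hne x hx)
  have hs0 : s ≠ 0 := by rintro rfl; simp at h; linarith
  have hlt : (k + 4 : ℝ) < card s * (1 + 1 / (k + 1)) :=
    h ▸ sum_map_lt_card_mul hs0 fun x hx => rhok_lt_one_add_inv (hne x hx)
  have hgt : (k + 2 : ℝ) < card s := by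
    by_contra! hc
    have h1 := mul_le_mul_of_nonneg_right hc (by positivity : (0 : ℝ) ≤ 1 + 1 / (k + 1))
    have h2 : (k + 2 : ℝ) * (1 + 1 / (k + 1)) ≤ k + 4 := by
      field_simp; nlinarith
    linarith
  have : k + 2 < card s := by exact_mod_cast hgt
  have : card s ≤ k + 4 := by rw [mul_one] at hle; exact_mod_cast hle
  omega

lemma eq_replicate_one_of_sum_map_rhok {s : Multiset ℕ} (hs : 0 ∉ s)
    (h : (s.map (rhok k)).sum = card s) : s = replicate (card s) 1 := by
  have hne : ∀ x ∈ s, x ≠ 0 := fun x hx h0 => hs (h0 ▸ hx)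
  refine eq_replicate_of_sum_map_eq (fun x hx => rhok_one (k := k) ▸ one_le_rhok (hne x hx))
    (fun x hx hx1 => ?_) (by rw [h, rhok_one, mul_one])
  by_contra hx1'
  exact (one_lt_rhok (k := k) (by have := hne x hx; omega)).ne' (hx1.trans rhok_one)

lemma eq_replicate_three_of_sum_map_rhok {t : Multiset ℕ} (ht : ∀ x ∈ t, 3 ≤ x)
    (h : (t.map (rhok k)).sum = card t * rhok k 3) : t = replicate (card t) 3 := by
  refine eq_replicate_of_sum_map_eq (fun x hx => rhok_three_le (ht x hx)) (fun x hx hx3 => ?_) h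
  by_contra hx3'
  exact (rhok_three_lt (k := k) (by have := ht x hx; omega)).ne' hx3

lemma eq_replicate_five_of_sum_map_rhok {t : Multiset ℕ} (ht : ∀ x ∈ t, 3 ≤ x)
    (hcard : card t = k + 1) (h : (t.map (rhok k)).sum = card t * rhok k 5) :
    t = replicate (card t) 5 := by
  set δ : ℝ := 1 / ((k + 1) * (k + 3) * (k ^ 2 + 5 * k + 5))
  set K : ℝ := (k + 2) ^ 3 / ((k ^ 2 + 4 * k + 2) ^ 3 * ((k + 1) * (k + 3)))
  have hδ : 0 < δ := by positivity
  have hK : 0 ≤ K := by positivity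
  have hcases : ∀ x ∈ t, rhok k x + δ ≤ rhok k 5 ∨ x = 5 ∨
      rhok k 5 < rhok k x ∧ rhok k x ≤ rhok k 5 + K := by
    intro x hx
    rcases (by have := ht x hx; omega : (3 ≤ x ∧ x ≤ 4) ∨ x = 5 ∨ 6 ≤ x) with ⟨h3, h4⟩ | h5 | h6
    · exact .inl (rhok_add_le_rhok_five h3 h4)
    · exact .inr (.inl h5)
    · exact .inr (.inr ⟨rhok_five_lt h6, rhok_le_rhok_five_add h6⟩)
  refine eq_replicate_of_sum_map_eq_of_gap hcard.le hK (mul_excess_lt_deficit k)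
    (fun x hx => ?_) (fun x hx hlt => ?_) (fun x hx hx5 => ?_) h
  all_goals rcases hcases x hx with hle | rfl | ⟨hlt5, hle5⟩
  all_goals first | rfl | linarith

lemma card_cases_of_sum_map_rhok_eq {a b : ℕ} {t : Multiset ℕ} (ht : ∀ x ∈ t, 3 ≤ x)
    (hcard : a + b + card t = k + 3) (hsum : a + b * rhok k 2 + (t.map (rhok k)).sum = k + 4) :
    (a = 0 ∧ b = k + 3 ∧ t = 0) ∨ (a = 1 ∧ b = 0 ∧ card t = k + 2) ∨
      (a = 1 ∧ b = 1 ∧ card t = k + 1) := by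
  rw [rhok_two, mul_one_add, mul_one_div] at hsum
  rcases empty_or_exists_mem t with rfl | ⟨x, hx⟩
  · rw [card_zero, add_zero] at hcard
    rw [map_zero, sum_zero, add_zero] at hsum
    have hab : (a : ℝ) + b = k + 3 := by exact_mod_cast hcard
    have hb : (b : ℝ) / (k + 3) = 1 := by linarith
    rw [div_eq_one_iff_eq (by positivity)] at hb
    have hb' : b = k + 3 := by exact_mod_cast hb
    exact .inl ⟨by omega, hb', rfl⟩
  right
  set c := card t
  have hlow : c * rhok k 3 ≤ (t.map (rhok k)).sum :=
    card_mul_le_sum_map fun x hx => rhok_three_le (ht x hx)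
  have hup : (t.map (rhok k)).sum < c * (1 + (k + 2) / (k ^ 2 + 4 * k + 2)) :=
    sum_map_lt_card_mul (by rintro rfl; simp at hx) fun x hx => rhok_lt (by have := ht x hx; omega)
  rw [rhok_three, mul_one_add, mul_one_div] at hlow
  rw [mul_one_add, mul_div_assoc'] at hup
  have hcR : (a : ℝ) + b + c = k + 3 := by exact_mod_cast hcard
  have hS : (t.map (rhok k)).sum = 1 + c - b / (k + 3) := by linarith
  have h1 : (c : ℝ) ≤ a * (k + 2) := by
    have : (c : ℝ) / (k + 2) + b / (k + 3) ≤ 1 := by linarith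
    rw [div_add_div _ _ (by positivity) (by positivity), div_le_one (by positivity)] at this
    nlinarith
  have h2 : (a : ℝ) * (k ^ 2 + 4 * k + 2) < c * (k + 4) := by
    have : (k + 3 - b : ℝ) / (k + 3) < c * (k + 2) / (k ^ 2 + 4 * k + 2) := by
      rw [sub_div, div_self (by positivity)]; linarith
    rw [div_lt_div_iff₀ (by positivity) (by positivity)] at this
    nlinarith
  have h1' : c ≤ a * (k + 2) := by exact_mod_cast h1
  have h2' : a * (k ^ 2 + 4 * k + 2) < c * (k + 4) := by exact_mod_cast h2
  have hc0 : 0 < c := card_pos_iff_exists_mem.2 ⟨x, hx⟩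
  obtain rfl : a = 1 := by
    rcases (by omega : a = 0 ∨ a = 1 ∨ 2 ≤ a) with rfl | rfl | ha2
    · omega
    · rfl
    · nlinarith
  have : k + 1 ≤ c := by nlinarith
  omega

theorem eq_of_sum_map_rhok_eq {s : Multiset ℕ} (hs : 0 ∉ s) (h : (s.map (rhok k)).sum = k + 4) :
    s = replicate (k + 4) 1 ∨ s = replicate (k + 3) 2 ∨ s = replicate (k + 2) 3 + {1} ∨
      s = replicate (k + 1) 5 + {2, 1} := by
  rcases card_eq_of_sum_map_rhok_eq hs h with hcard | hcard
  swap
  · exact .inl (hcard ▸ eq_replicate_one_of_sum_map_rhok hs (by rw [h, hcard]; push_cast; ring))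
  right
  obtain ⟨a, b, t, ht, rfl⟩ : ∃ a b t, (∀ x ∈ t, 3 ≤ x) ∧ s = replicate a 1 + replicate b 2 + t :=
    ⟨_, _, _, fun x hx => (mem_filter.1 hx).2, eq_replicate_one_add_replicate_two_add_filter hs⟩
  simp only [map_add, sum_add, map_replicate, sum_replicate, card_add, card_replicate,
    nsmul_eq_mul, rhok_one, mul_one] at h hcard
  rcases card_cases_of_sum_map_rhok_eq ht hcard h with
    ⟨rfl, rfl, rfl⟩ | ⟨rfl, rfl, htc⟩ | ⟨rfl, rfl, htc⟩
  · simp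
  · have hsum : (t.map (rhok k)).sum = k + 3 := by push_cast at h; linarith
    refine .inr (.inl ?_)
    have h3 : (t.map (rhok k)).sum = card t * rhok k 3 := by
      rw [hsum, htc, rhok_three]; push_cast; field_simp; ring
    rw [eq_replicate_three_of_sum_map_rhok ht h3, htc]
    simp only [replicate_one, replicate_zero, add_zero]
    abel
  · have hsum : (t.map (rhok k)).sum = k + 2 - 1 / (k + 3) := by
      rw [rhok_two] at h; push_cast at h; linarith
    refine .inr (.inr ?_)
    have h5 : (t.map (rhok k)).sum = card t * rhok k 5 := by
      rw [hsum, htc, rhok_five]; push_cast; field_simp; ring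
    rw [eq_replicate_five_of_sum_map_rhok ht htc h5, htc]
    simp only [replicate_one, insert_eq_cons, ← singleton_add]
    abel

end Classification

lemma rhokV_ofList (k : ℕ) (L : List ℕ) : rhokV k (ofList L) = (L.map (rhok k)).sum := by
  have hsupp : (Function.support fun i => rhok k (ofList L i)) ⊆ Finset.range L.length := by
    intro i hi
    by_contra hlen
    simp_all [ofList, rhok]
  rw [rhokV, finsum_eq_sum_of_support_subset _ hsupp, ← Fin.sum_univ_eq_sum_range, ← List.sum_ofFn]
  congr 1
  simp [ofList]

theorem IsVt.exists_eq_ofList {v : ℕ → ℕ} (hv : IsVt v) :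
    ∃ L : List ℕ, L.SortedGE ∧ 0 ∉ L ∧ v = ofList L := by
  obtain ⟨hmono, s, hs⟩ := hv
  have hex : ∃ m, v m = 0 := ⟨s, hs s le_rfl⟩
  refine ⟨List.ofFn fun i : Fin (Nat.find hex) => v i, ?_, ?_, ?_⟩
  · exact List.sortedGE_ofFn_iff.2 fun i j hij => hmono _ _ hij
  · simpa [List.mem_ofFn] using fun i => Nat.find_min hex i.2
  · funext i
    simp only [ofList, List.getD_eq_getElem?_getD, List.getElem?_ofFn, Nat.lt_find_iff, dite_eq_ite]
    split_ifs with h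
    · rfl
    · obtain ⟨m, hm, hm0⟩ : ∃ m ≤ i, v m = 0 := by simpa using h
      simpa [hm0] using hmono m i hm

lemma ofList_eq_of_coe_eq {L L' : List ℕ} (hL : L.SortedGE) (hL' : L'.SortedGE)
    (h : (L : Multiset ℕ) = L') : ofList L = ofList L' := by
  rw [(Multiset.coe_eq_coe.1 h).eq_of_sortedGE hL hL']

/-- For every integer `k ≥ 0`, the set of solutions `v ∈ Ṽ` of
`ρ_k(v) = k + 4` is exactly `{(1^{k+4}), (2^{k+3}), (3^{k+2},1), (5^{k+1},2,1)}`. -/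
theorem rhok_eq_solutions (k : ℕ) (v : ℕ → ℕ) (hv : IsVt v) :
    rhokV k v = (k : ℝ) + 4 ↔
      v = ofList (List.replicate (k + 4) 1) ∨
      v = ofList (List.replicate (k + 3) 2) ∨
      v = ofList (List.replicate (k + 2) 3 ++ [1]) ∨
      v = ofList (List.replicate (k + 1) 5 ++ [2, 1]) := by
  refine ⟨fun h => ?_, ?_⟩
  · obtain ⟨L, hL, hL0, rfl⟩ := hv.exists_eq_ofList
    rw [rhokV_ofList] at h
    rcases eq_of_sum_map_rhok_eq (s := L) (by simpa using hL0) (by simpa using h) with h | h | h | h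
    · exact .inl (ofList_eq_of_coe_eq hL
        (by simp [List.sortedGE_iff_pairwise]) (by rw [h]; rfl))
    · exact .inr <| .inl (ofList_eq_of_coe_eq hL
        (by simp [List.sortedGE_iff_pairwise]) (by rw [h]; rfl))
    · exact .inr <| .inr <| .inl (ofList_eq_of_coe_eq hL
        (by simp [List.sortedGE_iff_pairwise, List.pairwise_append]) (by rw [h]; rfl))
    · exact .inr <| .inr <| .inr (ofList_eq_of_coe_eq hL
        (by simp [List.sortedGE_iff_pairwise, List.pairwise_append]) (by rw [h]; rfl))
  · rintro (rfl | rfl | rfl | rfl) <;>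
      simp only [rhokV_ofList, List.map_append, List.map_replicate, List.map_cons, List.map_nil,
        List.sum_append, List.sum_replicate, List.sum_cons, List.sum_nil, nsmul_eq_mul, rhok_one,
        rhok_two, rhok_three, rhok_five, Nat.cast_add, Nat.cast_ofNat, Nat.cast_one, add_zero] <;>
      field_simp <;> ring
end

section
/- Let α be a positive rational number, and for real α define the sequence u₀(α) = 0, u₁(α) = 1, u_{n+2}(α) = (α+2)·u_{n+1}(α) − u_n(α) (one has u_n(α) > 0 for all n ≥ 1 since α > 0), and ρ_α(n) = 1 + u_{n−1}(α)/(u_n(α) + 1) for integers n ≥ 1. If there exist positive integers v₁, …, v_s (s ≥ 1) with Σ_{i=1}^{s} ρ_α(v_i) = α + 4, then α is an integer. -/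
/-!
If `α` is not an integer, pick a prime `p` dividing its denominator, so that `t = |α|_p > 1`.
In the recurrence the term `(α + 2) u_{n+1}` dominates `p`-adically, whence `|u_{n+1}|_p = t ^ n`
and every summand `u_{n-1} / (u_n + 1)` has `p`-adic norm at most `1 / t`. By the ultrametric
inequality so does their sum `α + 4 - s`, whose norm is `t > 1 / t`.
-/

/-- The Lucas sequence `U_n(a, 1)`; the paper's `u_n(α)` is `lucasU (α + 2) n`. -/
def lucasU (a : ℚ) : ℕ → ℚ
  | 0 => 0
  | 1 => 1
  | n + 2 => a * lucasU a (n + 1) - lucasU a n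

theorem eq_ratCast_lucasU {K : Type*} [DivisionRing K] [CharZero K] {a : ℚ} {u : ℕ → K}
    (h0 : u 0 = 0) (h1 : u 1 = 1) (hrec : ∀ n, u (n + 2) = (a : K) * u (n + 1) - u n) :
    ∀ n, u n = lucasU a n := by
  intro n
  induction n using Nat.twoStepInduction with
  | zero => simp [lucasU, h0]
  | one => simp [lucasU, h1]
  | more n ih₁ ih₂ => simp [lucasU, hrec, ih₁, ih₂]

theorem one_lt_padicNorm_minFac_den {q : ℚ} (hq : q.den ≠ 1) :
    1 < padicNorm q.den.minFac q := by
  have hp : q.den.minFac.Prime := Nat.minFac_prime hq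
  have := Fact.mk hp
  have hdvd : q.den.minFac ∣ q.den := Nat.minFac_dvd _
  have hnum : padicNorm q.den.minFac q.num = 1 := by
    rw [padicNorm.int_eq_one_iff, ← Int.dvd_natAbs, Int.natCast_dvd_natCast]
    exact fun h ↦ hp.one_lt.ne' ((q.reduced.coprime_dvd_left h).eq_one_of_dvd hdvd)
  have hden_lt : padicNorm q.den.minFac q.den < 1 := (padicNorm.nat_lt_one_iff _).2 hdvd
  have hden_pos : 0 < padicNorm q.den.minFac q.den :=
    lt_of_le_of_ne (padicNorm.nonneg _) (padicNorm.nonzero (by exact_mod_cast q.den_ne_zero)).symm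
  calc 1 < padicNorm q.den.minFac q.num / padicNorm q.den.minFac q.den := by
        rw [hnum]; exact one_lt_one_div hden_pos hden_lt
    _ = padicNorm q.den.minFac q := by rw [← padicNorm.div, q.num_div_den]

namespace padicNorm

variable {p : ℕ} [Fact p.Prime]

theorem add_int_of_one_lt {x : ℚ} (hx : 1 < padicNorm p x) (m : ℤ) :
    padicNorm p (x + m) = padicNorm p x := by
  have hm : padicNorm p m < padicNorm p x := (padicNorm.of_int m).trans_lt hx
  rw [add_eq_max_of_ne hm.ne', max_eq_left hm.le]

variable {a : ℚ}

theorem lucasU_succ (ha : 1 < padicNorm p a) (n : ℕ) :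
    padicNorm p (lucasU a (n + 1)) = padicNorm p a ^ n := by
  induction n using Nat.twoStepInduction with
  | zero => simp [lucasU]
  | one => simp [lucasU]
  | more n ih₁ ih₂ =>
    have hlt : padicNorm p (-lucasU a (n + 1)) < padicNorm p (a * lucasU a (n + 2)) := by
      rw [padicNorm.neg, padicNorm.mul, ih₁, ih₂, ← pow_succ']
      exact pow_lt_pow_right₀ ha (by omega)
    rw [lucasU, sub_eq_add_neg, add_eq_max_of_ne hlt.ne', max_eq_left hlt.le, padicNorm.mul, ih₂]
    ring

theorem lucasU_pred_div_lucasU_add_one_le (ha : 1 < padicNorm p a) (n : ℕ) :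
    padicNorm p (lucasU a (n - 1) / (lucasU a n + 1)) ≤ (padicNorm p a)⁻¹ := by
  have ht : 0 ≤ (padicNorm p a)⁻¹ := inv_nonneg.2 (padicNorm.nonneg a)
  match n with
  | 0 | 1 => simpa [lucasU] using ht
  | m + 2 =>
    have hden : padicNorm p (lucasU a (m + 2) + 1) = padicNorm p a ^ (m + 1) := by
      have hbig : 1 < padicNorm p (lucasU a (m + 2)) := by
        rw [lucasU_succ ha]; exact one_lt_pow₀ ha (by omega)
      rw [← Int.cast_one, add_int_of_one_lt hbig, lucasU_succ ha]
    rw [show m + 2 - 1 = m + 1 from rfl, padicNorm.div, lucasU_succ ha, hden, pow_succ,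
      div_mul_cancel_left₀ (pow_ne_zero _ (by positivity))]

end padicNorm

theorem rho_alpha_equation_integer_general (α : ℚ)
    (u : ℕ → ℝ) (hu0 : u 0 = 0) (hu1 : u 1 = 1)
    (hrec : ∀ n : ℕ, u (n + 2) = ((α : ℝ) + 2) * u (n + 1) - u n)
    (s : ℕ) (v : Fin s → ℕ)
    (heq : ∑ i, (1 + u (v i - 1) / (u (v i) + 1)) = (α : ℝ) + 4) :
    ∃ m : ℤ, α = m := by
  have hu := eq_ratCast_lucasU (a := α + 2) hu0 hu1 (by push_cast; exact hrec)
  have hsum : ∑ i, lucasU (α + 2) (v i - 1) / (lucasU (α + 2) (v i) + 1) =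
      α + ((4 - s : ℤ) : ℚ) := by
    simp only [hu, Finset.sum_add_distrib, Finset.sum_const, Finset.card_univ, Fintype.card_fin,
      nsmul_eq_mul, mul_one] at heq
    push_cast
    linarith [(by exact_mod_cast heq : (s : ℚ) + _ = α + 4)]
  by_contra hα
  have hden : α.den ≠ 1 := fun h ↦ hα ⟨α.num, (Rat.coe_int_num_of_den_eq_one h).symm⟩
  have := Fact.mk (Nat.minFac_prime hden)
  have ht := one_lt_padicNorm_minFac_den hden
  have ht₂ : 1 < padicNorm α.den.minFac (α + 2) := by
    rwa [← Int.cast_two, padicNorm.add_int_of_one_lt ht]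
  have hle := padicNorm.sum_le' (s := Finset.univ)
    (fun i _ ↦ padicNorm.lucasU_pred_div_lucasU_add_one_le ht₂ (v i)) (by positivity)
  rw [hsum, padicNorm.add_int_of_one_lt ht, ← Int.cast_two, padicNorm.add_int_of_one_lt ht] at hle
  exact ((inv_lt_one_of_one_lt₀ ht).trans ht).not_ge hle

/-- Let `α` be a positive rational and define `u₀(α) = 0`,
`u₁(α) = 1`, `u_{n+2}(α) = (α+2)·u_{n+1}(α) − u_n(α)` and
`ρ_α(n) = 1 + u_{n−1}(α)/(u_n(α) + 1)` for `n ≥ 1`.  If there are positive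
integers `v₁, …, v_s` (`s ≥ 1`) with `Σ_{i=1}^s ρ_α(v_i) = α + 4`, then `α` is an
integer. -/
theorem rho_alpha_equation_integer (α : ℚ) (hα : 0 < α)
    (u : ℕ → ℝ) (hu0 : u 0 = 0) (hu1 : u 1 = 1)
    (hrec : ∀ n : ℕ, u (n + 2) = ((α : ℝ) + 2) * u (n + 1) - u n)
    (s : ℕ) (hs : 1 ≤ s) (v : Fin s → ℕ) (hv : ∀ i, 1 ≤ v i)
    (heq : ∑ i, (1 + u (v i - 1) / (u (v i) + 1)) = (α : ℝ) + 4) :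
    ∃ m : ℤ, α = m :=
  rho_alpha_equation_integer_general α u hu0 hu1 hrec s v heq
end
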